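/- arXiv:2101.01982 — 6 statements merged into one kernel-verified Lean document; each statement's English description precedes it below -/
import Mathlib

section
/- Let 0 < c ≤ 2/5. Then every irrational x ∈ [c,1] has uncountably many different c-Lüroth expansions, i.e. the set of sequences {((s_n(ω,x), d_n(ω,x)))_{n≥1} : ω ∈ {0,1}^ℕ} is uncountable. -/
open MeasureTheory Filter Set
open scoped Classical ENNReal

noncomputable section

/-- The Lüroth map `T_L`. -/
def TL (x : ℝ) : ℝ :=
  if x = 0 then 0
  else if x = 1 then 1
  else (⌈1/x⌉ : ℝ) * ((⌈1/x⌉ : ℝ) - 1) * x - ((⌈1/x⌉ : ℝ) - 1)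

/-- The alternating Lüroth map `T_A`. -/
def TA (x : ℝ) : ℝ := 1 - TL x

/-- `z_n⁺ = z_n + c·z_n·z_{n-1}`. -/
def zp (c : ℝ) (n : ℕ) : ℝ := 1/(n:ℝ) + c * (1/(n:ℝ)) * (1/((n:ℝ) - 1))

/-- `z_n⁻ = z_n − c·z_n·z_{n+1}`. -/
def zm (c : ℝ) (n : ℕ) : ℝ := 1/(n:ℝ) - c * (1/(n:ℝ)) * (1/((n:ℝ) + 1))

/-- The maps `T_{0,c}` (`j = false`) and `T_{1,c}` (`j = true`); for `c = 0` the points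
`0` and `z_n`, `n ≥ 2`, are additionally sent to `1`. -/
def Tc (j : Bool) (c : ℝ) (x : ℝ) : ℝ :=
  if c = 0 ∧ (x = 0 ∨ ∃ n : ℕ, 2 ≤ n ∧ x = 1/(n:ℝ)) then 1
  else if x = 1 then 1
  else if (j = false ∧ ∃ n : ℕ, 2 ≤ n ∧ 1/(n:ℝ) ≤ x ∧ x < zp c n) ∨
          (j = true ∧ ∃ n : ℕ, 2 ≤ n ∧ 1/(n:ℝ) ≤ x ∧ x ≤ zm c (n-1)) then TA x
  else TL x

/-- Random iteration: `Tom c ω n = T_{ω_n,c} ∘ ⋯ ∘ T_{ω_1,c}` (paths 0-indexed). -/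
def Tom (c : ℝ) (ω : ℕ → Bool) : ℕ → ℝ → ℝ
  | 0 => fun x => x
  | n+1 => fun x => Tc (ω n) c (Tom c ω n x)

/-- The digit `d_{n+1}(ω,x)` (0-indexed: `dig c ω x n` is the digit determined by `T_ω^n x`). -/
def dig (c : ℝ) (ω : ℕ → Bool) (x : ℝ) (n : ℕ) : ℕ :=
  if Tom c ω n x = 1 then 2 else (⌈1/(Tom c ω n x)⌉).toNat

/-- The switch region `S = [c,1] ∩ ⋃_{n≥2} [z_n⁺, z_{n-1}⁻]`. -/
def SwitchS (c : ℝ) : Set ℝ :=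
  {y | y ∈ Set.Icc c 1 ∧ ∃ n : ℕ, 2 ≤ n ∧ zp c n ≤ y ∧ y ≤ zm c (n-1)}

/-- The sign `s_{n+1}(ω,x)` (0-indexed: `sgn c ω x n` is the sign determined by `T_ω^n x`). -/
def sgn (c : ℝ) (ω : ℕ → Bool) (x : ℝ) (n : ℕ) : ℕ :=
  if c = 0 then (if ω n then 1 else 0)
  else if (ω n = false ∧ Tom c ω n x ∈ SwitchS c) ∨
          (∃ d : ℕ, 1 ≤ d ∧ zm c d < Tom c ω n x ∧ Tom c ω n x < 1/(d:ℝ)) ∨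
          Tom c ω n x = 1 then 0
  else 1

/-- The c-Lüroth expansion: `expansion c ω x n = (s_{n+1}(ω,x), d_{n+1}(ω,x))`. -/
def expansion (c : ℝ) (ω : ℕ → Bool) (x : ℝ) (n : ℕ) : ℕ × ℕ :=
  (sgn c ω x n, dig c ω x n)

/-- A sequence is ultimately periodic if some tail is periodic. -/
def UltimatelyPeriodic {α : Type*} (a : ℕ → α) : Prop :=
  ∃ N r : ℕ, 1 ≤ r ∧ ∀ n, N ≤ n → a (n + r) = a n

/-- The `n`-th convergent `p_n/q_n(ω,x)`. -/
def conv (c : ℝ) (ω : ℕ → Bool) (x : ℝ) (n : ℕ) : ℝ :=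
  ∑ k ∈ Finset.range n,
    (-1 : ℝ) ^ (∑ i ∈ Finset.range k, sgn c ω x i) *
      ((dig c ω x k : ℝ) - 1 + (sgn c ω x k : ℝ)) /
      (∏ i ∈ Finset.range (k+1), ((dig c ω x i : ℝ) * ((dig c ω x i : ℝ) - 1)))

/-- The value `Σ_{n≥1} (−1)^{s_1+⋯+s_{n−1}} (d_n − 1 + s_n)/∏_{i≤n} d_i(d_i−1)` of a
sign-digit sequence (0-indexed). -/
def lurothSum (a : ℕ → ℕ × ℕ) : ℝ :=
  ∑' n : ℕ,
    (-1 : ℝ) ^ (∑ i ∈ Finset.range n, (a i).1) *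
      (((a n).2 : ℝ) - 1 + ((a n).1 : ℝ)) /
      (∏ i ∈ Finset.range (n+1), (((a i).2 : ℝ) * (((a i).2 : ℝ) - 1)))

/-- The Bernoulli `(p, 1-p)` product measure on `{0,1}^ℕ` (coordinate `0 ↔ false` has
probability `p`). -/
def IsBernoulli (p : ℝ) (m : Measure (ℕ → Bool)) : Prop :=
  IsProbabilityMeasure m ∧
  ∀ (n : ℕ) (f : Fin n → Bool),
    m {ω : ℕ → Bool | ∀ i : Fin n, ω i = f i} =
      ∏ i : Fin n, ENNReal.ofReal (if f i then 1 - p else p)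

/-- The random 0-Lüroth transformation `L_0`. -/
def L0 (q : (ℕ → Bool) × ℝ) : (ℕ → Bool) × ℝ := (fun n => q.1 (n+1), Tc (q.1 0) 0 q.2)

/-- The `n`-th approximation coefficient `θ_n(ω,x)` (1-indexed `n`). -/
def theta (ω : ℕ → Bool) (x : ℝ) (n : ℕ) : ℝ :=
  ((dig 0 ω x (n-1) : ℝ) - (sgn 0 ω x (n-1) : ℝ)) *
    (∏ i ∈ Finset.range (n-1), ((dig 0 ω x i : ℝ) * ((dig 0 ω x i : ℝ) - 1))) *
    |x - conv 0 ω x n|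

/-- Distribution function `F_L` of the Lüroth approximation coefficients. -/
def FL (y : ℝ) : ℝ := (∑ k ∈ Finset.Icc 2 (⌊1/y⌋₊ + 1), y / (k:ℝ)) + 1/((⌊1/y⌋₊ : ℝ) + 1)

/-- Distribution function `F_A` of the alternating Lüroth approximation coefficients. -/
def FA (y : ℝ) : ℝ := (∑ k ∈ Finset.Icc 2 ⌊1/y⌋₊, y / ((k:ℝ) - 1)) + 1/(⌊1/y⌋₊ : ℝ)

/-- A sequence over the alphabet `A` is universal if every finite word over `A` occurs
in it as a consecutive block. -/
def IsUniversal (A : Set (ℕ × ℕ)) (e : ℕ → ℕ × ℕ) : Prop :=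
  ∀ (m : ℕ) (w : Fin m → ℕ × ℕ), (∀ i, w i ∈ A) →
    ∃ k : ℕ, ∀ i : Fin m, e (k + (i : ℕ)) = w i

/-- `c`-Lüroth admissible sequences. -/
def Admissible (c : ℝ) (a : ℕ → ℕ × ℕ) : Prop :=
  (∀ n, (a n).1 ≤ 1 ∧ 2 ≤ (a n).2 ∧ (a n).2 ≤ ⌈1/c⌉₊) ∧
  (∀ k : ℕ, lurothSum (fun n => a (k + n)) ∈ Set.Icc c 1) ∧
  ¬ ∃ (N d : ℕ), 2 ≤ d ∧ d < ⌈1/c⌉₊ ∧ a N = (0, d+1) ∧ ∀ n, N < n → a n = (0, 2)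

/-!
For `c ≤ 2/5` both maps send the irrationals of `[c,1]` to themselves and agree off the switch
region `S`, while at a point of `S` the sign digit records the choice `ω_n`. In the coordinate
`u = T_L y` of the Lüroth cylinder containing `y`, the set `S` is `c ≤ u ≤ 1 - c`; off `S` the next
point lies in `(1 - c, 1)`, where `T_{0,c}` is `y ↦ 2y - 1` or `y ↦ 2 - 2y`, doubling the distance
to `1` or to `2/3`, so an irrational orbit cannot avoid `S` for ever. Hence every path visits `S`
infinitely often. The expansion depends continuously on `ω`, and flipping `ω` at a late visit to
`S` changes the expansion, so no fibre of `ω ↦ expansion` has interior; by Baire's theorem on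
`{0,1}^ℕ` there are uncountably many expansions.
-/

theorem exists_iterate_mem_of_expanding {X : Type*} [MetricSpace X] {f : X → X}
    {A B : Set X} {p : X} {a r : ℝ} (ha : 1 < a) (hmaps : ∀ z ∈ A, f z ∈ A ∪ B)
    (hexp : ∀ z ∈ A, dist (f z) p = a * dist z p) (hbdd : ∀ z ∈ A, dist z p < r)
    {y : X} (hy : y ∈ A) (hyp : y ≠ p) : ∃ k, f^[k] y ∈ B := by
  by_contra! hB
  have horbit : ∀ k, f^[k] y ∈ A ∧ dist (f^[k] y) p = a ^ k * dist y p := by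
    intro k
    induction k with
    | zero => simp [hy]
    | succ k ih =>
      have hBk := hB (k + 1)
      rw [Function.iterate_succ_apply'] at hBk ⊢
      refine ⟨(hmaps _ ih.1).resolve_right hBk, ?_⟩
      rw [hexp _ ih.1, ih.2, pow_succ]
      ring
  obtain ⟨k, hk⟩ := pow_unbounded_of_one_lt (r / dist y p) ha
  rw [div_lt_iff₀ (dist_pos.2 hyp)] at hk
  have := hbdd _ (horbit k).1
  rw [(horbit k).2] at this
  linarith

theorem not_countable_range_of_branching {β : Type*} (F : (ℕ → Bool) → ℕ → β)
    (hcausal : ∀ ω ω' n, (∀ i ≤ n, ω i = ω' i) → F ω n = F ω' n)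
    (hbranch : ∀ ω N, ∃ n, N ≤ n ∧ F (Function.update ω n (!ω n)) n ≠ F ω n) :
    ¬ (range F).Countable := by
  intro hcount
  let _ : TopologicalSpace β := ⊥
  have _ : DiscreteTopology β := ⟨rfl⟩
  have _ := hcount.to_subtype
  have hF : Continuous F := continuous_pi fun n => IsLocallyConstant.continuous <|
    (IsLocallyConstant.iff_exists_open _).2 fun ω =>
      ⟨PiNat.cylinder ω (n + 1), PiNat.isOpen_cylinder _ _ _, PiNat.self_mem_cylinder _ _,
        fun ω' hω' => hcausal ω' ω n fun i hi => PiNat.mem_cylinder_iff.1 hω' i (by omega)⟩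
  obtain ⟨e, ω, hω⟩ := nonempty_interior_of_iUnion_of_closed
    (f := fun e : range F => F ⁻¹' {e.1}) (fun e => isClosed_singleton.preimage hF)
    (eq_univ_of_forall fun ω => mem_iUnion.2 ⟨⟨F ω, mem_range_self ω⟩, rfl⟩)
  obtain ⟨_, ⟨y, N, rfl⟩, hωN, hsub⟩ :=
    (PiNat.isTopologicalBasis_cylinders _).exists_subset_of_mem_open hω isOpen_interior
  have hfiber : ∀ ω' ∈ PiNat.cylinder ω N, F ω' = e.1 := by
    rw [PiNat.mem_cylinder_iff_eq.1 hωN]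
    exact fun ω' hω' => interior_subset (s := F ⁻¹' {e.1}) (hsub hω')
  obtain ⟨n, hNn, hne⟩ := hbranch ω N
  refine hne (congrFun ((hfiber _ ?_).trans (hfiber _ (PiNat.self_mem_cylinder _ _)).symm) n)
  exact PiNat.mem_cylinder_iff.2 fun i hi => Function.update_of_ne (by omega) _ _

namespace CLuroth

/-- The affine branch of `TL` on the cylinder `[1/n, 1/(n-1))`. -/
def branchCoord (n : ℕ) (y : ℝ) : ℝ := n * (n - 1) * y - (n - 1)

variable {c y : ℝ} {n m : ℕ}

lemma strictMono_branchCoord (hn : 2 ≤ n) : StrictMono (branchCoord n) := by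
  have : (0 : ℝ) < n * (n - 1) := by
    have : (2 : ℝ) ≤ n := by exact_mod_cast hn
    nlinarith
  intro y z h
  unfold branchCoord
  nlinarith

lemma branchCoord_one_div (hn : 2 ≤ n) : branchCoord n (1 / n) = 0 := by
  have : (n : ℝ) ≠ 0 := by positivity
  unfold branchCoord
  field_simp
  ring

lemma branchCoord_one_div_pred (hn : 2 ≤ n) : branchCoord n (1 / (n - 1)) = 1 := by
  have : (n : ℝ) - 1 ≠ 0 := by
    have : (2 : ℝ) ≤ n := by exact_mod_cast hn
    linarith
  unfold branchCoord
  field_simp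
  ring

lemma branchCoord_zp (hn : 2 ≤ n) : branchCoord n (zp c n) = c := by
  have : (2 : ℝ) ≤ n := by exact_mod_cast hn
  have : (n : ℝ) - 1 ≠ 0 := by linarith
  have : (n : ℝ) ≠ 0 := by positivity
  unfold branchCoord zp
  field_simp
  ring

lemma branchCoord_zm_pred (hn : 2 ≤ n) : branchCoord n (zm c (n - 1)) = 1 - c := by
  have : (2 : ℝ) ≤ n := by exact_mod_cast hn
  have : (n : ℝ) - 1 ≠ 0 := by linarith
  have : (n : ℝ) ≠ 0 := by positivity
  unfold branchCoord zm
  rw [Nat.cast_sub (by omega), Nat.cast_one, sub_add_cancel]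
  field_simp
  ring

lemma branchCoord_two (y : ℝ) : branchCoord 2 y = 2 * y - 1 := by
  norm_num [branchCoord]

lemma one_div_le_iff_branchCoord_nonneg (hn : 2 ≤ n) : 1 / n ≤ y ↔ 0 ≤ branchCoord n y := by
  rw [← (strictMono_branchCoord hn).le_iff_le, branchCoord_one_div hn]

lemma lt_one_div_pred_iff_branchCoord_lt_one (hn : 2 ≤ n) :
    y < 1 / (n - 1) ↔ branchCoord n y < 1 := by
  rw [← (strictMono_branchCoord hn).lt_iff_lt, branchCoord_one_div_pred hn]

lemma ne_one_of_branchCoord_lt_one (hn : 2 ≤ n) (h1 : branchCoord n y < 1) : y ≠ 1 := by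
  rintro rfl
  have : (2 : ℝ) ≤ n := by exact_mod_cast hn
  unfold branchCoord at h1
  nlinarith

lemma ceil_one_div_eq (hn : 2 ≤ n) (h0 : 0 ≤ branchCoord n y) (h1 : branchCoord n y < 1) :
    ⌈1 / y⌉ = n := by
  rw [← one_div_le_iff_branchCoord_nonneg hn] at h0
  rw [← lt_one_div_pred_iff_branchCoord_lt_one hn] at h1
  have hN : (2 : ℝ) ≤ n := by exact_mod_cast hn
  have hy : 0 < y := lt_of_lt_of_le (by positivity) h0
  rw [Int.ceil_eq_iff]
  push_cast
  constructor
  · rwa [lt_one_div (by linarith) hy]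
  · rwa [one_div_le hy (by positivity)]

lemma eq_of_branchCoord_mem (hn : 2 ≤ n) (hm : 2 ≤ m) (hn0 : 0 ≤ branchCoord n y)
    (hn1 : branchCoord n y < 1) (hm0 : 0 ≤ branchCoord m y) (hm1 : branchCoord m y < 1) :
    m = n := by
  exact_mod_cast (ceil_one_div_eq hm hm0 hm1).symm.trans (ceil_one_div_eq hn hn0 hn1)

lemma exists_branchCoord_mem (hy0 : 0 < y) (hy1 : y < 1) :
    ∃ n, 2 ≤ n ∧ 0 ≤ branchCoord n y ∧ branchCoord n y < 1 := by
  have hinv : 1 < 1 / y := by rwa [lt_one_div one_pos hy0, div_one]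
  have hn : 2 ≤ ⌈1 / y⌉₊ := by
    have := Nat.lt_ceil.2 (by exact_mod_cast hinv : ((1 : ℕ) : ℝ) < 1 / y)
    omega
  have hN : (2 : ℝ) ≤ ⌈1 / y⌉₊ := by exact_mod_cast hn
  refine ⟨_, hn, (one_div_le_iff_branchCoord_nonneg hn).1 ?_,
    (lt_one_div_pred_iff_branchCoord_lt_one hn).1 ?_⟩
  · rw [one_div_le (by positivity) hy0]
    exact Nat.le_ceil _
  · rw [lt_one_div hy0 (by linarith)]
    linarith [Nat.ceil_lt_add_one (by positivity : 0 ≤ 1 / y)]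

lemma TL_eq_branchCoord (hn : 2 ≤ n) (h0 : 0 ≤ branchCoord n y) (h1 : branchCoord n y < 1) :
    TL y = branchCoord n y := by
  have hy0 : y ≠ 0 := by
    rintro rfl
    have : (2 : ℝ) ≤ n := by exact_mod_cast hn
    unfold branchCoord at h0
    linarith
  rw [TL, if_neg hy0, if_neg (ne_one_of_branchCoord_lt_one hn h1), ceil_one_div_eq hn h0 h1,
    branchCoord]
  push_cast
  ring

lemma Tc_false_eq (hc0 : 0 < c) (hc1 : c ≤ 1) (hn : 2 ≤ n) (h0 : 0 ≤ branchCoord n y)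
    (h1 : branchCoord n y < 1) :
    Tc false c y = if branchCoord n y < c then 1 - branchCoord n y else branchCoord n y := by
  have hcond : (∃ m : ℕ, 2 ≤ m ∧ 1 / (m : ℝ) ≤ y ∧ y < zp c m) ↔ branchCoord n y < c := by
    constructor
    · rintro ⟨m, hm, hm0, hm1⟩
      rw [one_div_le_iff_branchCoord_nonneg hm] at hm0
      rw [← (strictMono_branchCoord hm).lt_iff_lt, branchCoord_zp hm] at hm1
      obtain rfl := eq_of_branchCoord_mem hn hm h0 h1 hm0 (by linarith)
      exact hm1
    · intro h
      refine ⟨n, hn, (one_div_le_iff_branchCoord_nonneg hn).2 h0, ?_⟩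
      rwa [← (strictMono_branchCoord hn).lt_iff_lt, branchCoord_zp (c := c) hn]
  rw [Tc, if_neg fun h => hc0.ne' h.1, if_neg (ne_one_of_branchCoord_lt_one hn h1)]
  simp only [true_and, Bool.false_eq_true, false_and, or_false, hcond]
  split_ifs <;> simp only [TA, TL_eq_branchCoord hn h0 h1]

lemma Tc_true_eq (hc0 : 0 < c) (hn : 2 ≤ n) (h0 : 0 ≤ branchCoord n y)
    (h1 : branchCoord n y < 1) :
    Tc true c y = if branchCoord n y ≤ 1 - c then 1 - branchCoord n y else branchCoord n y := by
  have hcond : (∃ m : ℕ, 2 ≤ m ∧ 1 / (m : ℝ) ≤ y ∧ y ≤ zm c (m - 1)) ↔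
      branchCoord n y ≤ 1 - c := by
    constructor
    · rintro ⟨m, hm, hm0, hm1⟩
      rw [one_div_le_iff_branchCoord_nonneg hm] at hm0
      rw [← (strictMono_branchCoord hm).le_iff_le, branchCoord_zm_pred hm] at hm1
      obtain rfl := eq_of_branchCoord_mem hn hm h0 h1 hm0 (by linarith)
      exact hm1
    · intro h
      refine ⟨n, hn, (one_div_le_iff_branchCoord_nonneg hn).2 h0, ?_⟩
      rwa [← (strictMono_branchCoord hn).le_iff_le, branchCoord_zm_pred (c := c) hn]
  rw [Tc, if_neg fun h => hc0.ne' h.1, if_neg (ne_one_of_branchCoord_lt_one hn h1)]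
  simp only [Bool.true_eq_false, false_and, true_and, false_or, hcond]
  split_ifs <;> simp only [TA, TL_eq_branchCoord hn h0 h1]

lemma exists_branchCoord_of_mem_switchS (hy : y ∈ SwitchS c) :
    ∃ n, 2 ≤ n ∧ c ≤ branchCoord n y ∧ branchCoord n y ≤ 1 - c := by
  obtain ⟨-, n, hn, h0, h1⟩ := hy
  refine ⟨n, hn, ?_, ?_⟩
  · rwa [← branchCoord_zp (c := c) hn, (strictMono_branchCoord hn).le_iff_le]
  · rwa [← branchCoord_zm_pred (c := c) hn, (strictMono_branchCoord hn).le_iff_le]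

lemma mem_switchS_iff (hc0 : 0 < c) (hn : 2 ≤ n) (h0 : 0 ≤ branchCoord n y)
    (h1 : branchCoord n y < 1) :
    y ∈ SwitchS c ↔ y ∈ Icc c 1 ∧ c ≤ branchCoord n y ∧ branchCoord n y ≤ 1 - c := by
  constructor
  · intro hy
    obtain ⟨m, hm, hm0, hm1⟩ := exists_branchCoord_of_mem_switchS hy
    obtain rfl := eq_of_branchCoord_mem hn hm h0 h1 (by linarith) (by linarith)
    exact ⟨hy.1, hm0, hm1⟩
  · rintro ⟨hyI, hc, hc'⟩
    refine ⟨hyI, n, hn, ?_, ?_⟩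
    · rwa [← branchCoord_zp (c := c) hn, (strictMono_branchCoord hn).le_iff_le] at hc
    · rwa [← branchCoord_zm_pred (c := c) hn, (strictMono_branchCoord hn).le_iff_le] at hc'

lemma not_mem_gap_of_mem_switchS (hy : y ∈ SwitchS c) :
    ¬ ∃ d : ℕ, 1 ≤ d ∧ zm c d < y ∧ y < 1 / (d : ℝ) := by
  rintro ⟨d, hd, hd0, hd1⟩
  obtain ⟨n, hn, hn0, hn1⟩ := exists_branchCoord_of_mem_switchS hy
  have hm : 2 ≤ d + 1 := by omega
  have hmono := strictMono_branchCoord hm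
  rw [show d = d + 1 - 1 by omega, ← hmono.lt_iff_lt, branchCoord_zm_pred hm] at hd0
  rw [show (d : ℝ) = ((d + 1 : ℕ) : ℝ) - 1 by push_cast; ring,
    lt_one_div_pred_iff_branchCoord_lt_one hm] at hd1
  obtain rfl := eq_of_branchCoord_mem hn hm (by linarith) (by linarith) (by linarith) hd1
  linarith

lemma ne_one_of_mem_switchS (hc0 : 0 < c) (hy : y ∈ SwitchS c) : y ≠ 1 := by
  obtain ⟨n, hn, -, hn1⟩ := exists_branchCoord_of_mem_switchS hy
  exact ne_one_of_branchCoord_lt_one hn (by linarith)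

lemma exists_branchCoord_of_irrational (hy : Irrational y) (hy0 : 0 < y) (hy1 : y ≤ 1) :
    ∃ n, 2 ≤ n ∧ 0 < branchCoord n y ∧ branchCoord n y < 1 ∧ Irrational (branchCoord n y) := by
  obtain ⟨n, hn, h0, h1⟩ := exists_branchCoord_mem hy0 (lt_of_le_of_ne hy1 (hy.ne_one))
  have hirr : Irrational (branchCoord n y) := by
    have h := (hy.natCast_mul (m := n * (n - 1))
      (Nat.mul_ne_zero (by omega) (by omega))).sub_natCast (n - 1)
    rwa [Nat.cast_mul, Nat.cast_sub (by omega), Nat.cast_one] at h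
  exact ⟨n, hn, lt_of_le_of_ne h0 (Ne.symm hirr.ne_zero), h1, hirr⟩

lemma Tc_mapsTo (hc0 : 0 < c) (hc : c ≤ 1 / 2) (j : Bool) :
    MapsTo (Tc j c) {y | Irrational y ∧ y ∈ Icc c 1} {y | Irrational y ∧ y ∈ Icc c 1} := by
  rintro y ⟨hy, hyc, hy1⟩
  obtain ⟨n, hn, h0, h1, hirr⟩ := exists_branchCoord_of_irrational hy (by linarith) hy1
  have hirr' : Irrational (1 - branchCoord n y) := by simpa using hirr.ratCast_sub 1
  cases j
  · rw [Tc_false_eq hc0 (by linarith) hn h0.le h1]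
    split_ifs <;> refine ⟨‹_›, ?_, ?_⟩ <;> linarith
  · rw [Tc_true_eq hc0 hn h0.le h1]
    split_ifs <;> refine ⟨‹_›, ?_, ?_⟩ <;> linarith

lemma Tc_eq_Tc_false_of_not_mem_switchS (hc0 : 0 < c) (hc : c ≤ 1 / 2) (hy : Irrational y)
    (hyI : y ∈ Icc c 1) (hS : y ∉ SwitchS c) (j : Bool) : Tc j c y = Tc false c y := by
  obtain ⟨n, hn, h0, h1, -⟩ := exists_branchCoord_of_irrational hy (by linarith [hyI.1]) hyI.2
  rw [mem_switchS_iff hc0 hn h0.le h1] at hS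
  cases j
  · rfl
  · rw [Tc_false_eq hc0 (by linarith) hn h0.le h1, Tc_true_eq hc0 hn h0.le h1]
    by_cases hlt : branchCoord n y < c
    · rw [if_pos hlt, if_pos (by linarith)]
    · rw [if_neg hlt, if_neg fun h => hS ⟨hyI, not_lt.1 hlt, h⟩]

lemma one_sub_lt_Tc_false_of_not_mem_switchS (hc0 : 0 < c) (hc : c ≤ 1 / 2)
    (hy : Irrational y) (hyI : y ∈ Icc c 1) (hS : y ∉ SwitchS c) : 1 - c < Tc false c y := by
  obtain ⟨n, hn, h0, h1, -⟩ := exists_branchCoord_of_irrational hy (by linarith [hyI.1]) hyI.2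
  rw [mem_switchS_iff hc0 hn h0.le h1] at hS
  rw [Tc_false_eq hc0 (by linarith) hn h0.le h1]
  split_ifs with hlt
  · linarith
  · by_contra! hle
    exact hS ⟨hyI, not_lt.1 hlt, hle⟩

lemma zp_two : zp c 2 = (1 + c) / 2 := by norm_num [zp]; ring

lemma zm_one : zm c 1 = 1 - c / 2 := by norm_num [zm]; ring

lemma Icc_zp_two_zm_one_subset_switchS (hc0 : 0 ≤ c) (hc1 : c ≤ 1) :
    Icc (zp c 2) (zm c 1) ⊆ SwitchS c := by
  rintro y ⟨h0, h1⟩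
  rw [zp_two] at h0
  rw [zm_one] at h1
  exact ⟨⟨by linarith, by linarith⟩, 2, le_rfl, by rwa [zp_two], by norm_num [zm_one]; linarith⟩

lemma Tc_false_of_half_le (hc0 : 0 < c) (hc1 : c ≤ 1) (h0 : 1 / 2 ≤ y) (h1 : y < 1) :
    Tc false c y = if 2 * y - 1 < c then 2 - 2 * y else 2 * y - 1 := by
  rw [Tc_false_eq hc0 hc1 le_rfl (by rw [branchCoord_two]; linarith)
    (by rw [branchCoord_two]; linarith), branchCoord_two]
  split_ifs <;> ring

section

variable (hc0 : 0 < c) (hc : c ≤ 2 / 5)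
include hc0 hc

lemma exists_iterate_mem_switchS_of_lower (hy : y ∈ Ioo (1 - c) (zp c 2)) (hy' : y ≠ 2 / 3) :
    ∃ k, (Tc false c)^[k] y ∈ SwitchS c := by
  have hf : ∀ z ∈ Ioo (1 - c) (zp c 2), Tc false c z = 2 - 2 * z := by
    rintro z ⟨h0, h1⟩
    rw [zp_two] at h1
    rw [Tc_false_of_half_le hc0 (by linarith) (by linarith) (by linarith), if_pos (by linarith)]
  refine exists_iterate_mem_of_expanding one_lt_two (p := 2 / 3) (r := c) ?_ ?_ ?_ hy hy'
  · intro z hz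
    rw [hf z hz]
    obtain ⟨h0, h1⟩ := hz
    rw [zp_two] at h1
    by_cases hlt : 2 - 2 * z < zp c 2
    · exact Or.inl ⟨by linarith, hlt⟩
    · exact Or.inr (Icc_zp_two_zm_one_subset_switchS hc0.le (by linarith)
        ⟨not_lt.1 hlt, by rw [zm_one]; linarith⟩)
  · intro z hz
    rw [hf z hz, Real.dist_eq, Real.dist_eq, show 2 - 2 * z - 2 / 3 = -2 * (z - 2 / 3) by ring,
      abs_mul]
    norm_num
  · rintro z ⟨h0, h1⟩
    rw [zp_two] at h1
    rw [Real.dist_eq, abs_lt]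
    constructor <;> linarith

lemma exists_iterate_mem_lower_or_switchS_of_upper (hy : y ∈ Ioo (zm c 1) 1) :
    ∃ k, (Tc false c)^[k] y ∈ Ioo (1 - c) (zp c 2) ∪ SwitchS c := by
  have hf : ∀ z ∈ Ioo (zm c 1) 1, Tc false c z = 2 * z - 1 := by
    rintro z ⟨h0, h1⟩
    rw [zm_one] at h0
    rw [Tc_false_of_half_le hc0 (by linarith) (by linarith) h1, if_neg (by linarith)]
  refine exists_iterate_mem_of_expanding one_lt_two (p := 1) (r := c / 2) ?_ ?_ ?_ hy hy.2.ne
  · intro z hz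
    rw [hf z hz]
    obtain ⟨h0, h1⟩ := hz
    rw [zm_one] at h0
    by_cases hlt : 2 * z - 1 < zp c 2
    · exact Or.inr (Or.inl ⟨by linarith, hlt⟩)
    by_cases hle : 2 * z - 1 ≤ zm c 1
    · exact Or.inr (Or.inr (Icc_zp_two_zm_one_subset_switchS hc0.le (by linarith)
        ⟨not_lt.1 hlt, hle⟩))
    · exact Or.inl ⟨not_le.1 hle, by linarith⟩
  · intro z hz
    rw [hf z hz, Real.dist_eq, Real.dist_eq, show 2 * z - 1 - 1 = 2 * (z - 1) by ring, abs_mul]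
    norm_num
  · rintro z ⟨h0, h1⟩
    rw [zm_one] at h0
    rw [Real.dist_eq, abs_lt]
    constructor <;> linarith

lemma exists_iterate_mem_switchS_of_near_one (hy : Irrational y) (hy1 : y ∈ Ioo (1 - c) 1) :
    ∃ k, (Tc false c)^[k] y ∈ SwitchS c := by
  have hlower : ∀ z, Irrational z → z ∈ Ioo (1 - c) (zp c 2) →
      ∃ k, (Tc false c)^[k] z ∈ SwitchS c := fun z hz hzI =>
    exists_iterate_mem_switchS_of_lower hc0 hc hzI (by rintro rfl; exact hz ⟨2 / 3, by norm_num⟩)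
  by_cases h0 : y < zp c 2
  · exact hlower y hy ⟨hy1.1, h0⟩
  by_cases h1 : y ≤ zm c 1
  · exact ⟨0, Icc_zp_two_zm_one_subset_switchS hc0.le (by linarith) ⟨not_lt.1 h0, h1⟩⟩
  obtain ⟨k, hk | hk⟩ := exists_iterate_mem_lower_or_switchS_of_upper hc0 hc ⟨not_le.1 h1, hy1.2⟩
  · have hirr := ((Tc_mapsTo hc0 (by linarith) false).iterate k
      ⟨hy, by linarith [hy1.1], hy1.2.le⟩).1
    obtain ⟨j, hj⟩ := hlower _ hirr hk
    exact ⟨j + k, by rwa [Function.iterate_add_apply]⟩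
  · exact ⟨k, hk⟩

lemma exists_iterate_mem_switchS (hy : Irrational y) (hyI : y ∈ Icc c 1) :
    ∃ k, (Tc false c)^[k] y ∈ SwitchS c := by
  by_cases hS : y ∈ SwitchS c
  · exact ⟨0, hS⟩
  obtain ⟨hirr, -, hle⟩ := Tc_mapsTo hc0 (by linarith) false ⟨hy, hyI⟩
  obtain ⟨k, hk⟩ := exists_iterate_mem_switchS_of_near_one hc0 hc hirr
    ⟨one_sub_lt_Tc_false_of_not_mem_switchS hc0 (by linarith) hy hyI hS,
      lt_of_le_of_ne hle hirr.ne_one⟩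
  exact ⟨k + 1, by rwa [Function.iterate_succ_apply]⟩

end

variable {x : ℝ} {ω ω' : ℕ → Bool}

lemma Tom_congr (h : ∀ i < n, ω i = ω' i) : Tom c ω n x = Tom c ω' n x := by
  induction n with
  | zero => rfl
  | succ n ih =>
    simp only [Tom, ih fun i hi => h i (by omega), h n n.lt_succ_self]

lemma expansion_congr (h : ∀ i ≤ n, ω i = ω' i) : expansion c ω x n = expansion c ω' x n := by
  simp only [expansion, sgn, dig, Tom_congr fun i hi => h i hi.le, h n le_rfl]

lemma sgn_of_mem_switchS (hc0 : 0 < c) (hS : Tom c ω n x ∈ SwitchS c) :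
    sgn c ω x n = (ω n).toNat := by
  have hgap := not_mem_gap_of_mem_switchS hS
  have hne := ne_one_of_mem_switchS hc0 hS
  rw [sgn, if_neg hc0.ne']
  cases ω n
  · rw [if_pos (Or.inl ⟨rfl, hS⟩)]
    rfl
  · rw [if_neg fun h => h.elim (fun h' => Bool.noConfusion h'.1) fun h' => h'.elim hgap hne]
    rfl

lemma Tom_mem (hc0 : 0 < c) (hc : c ≤ 1 / 2) (hxi : Irrational x) (hx : x ∈ Icc c 1)
    (ω : ℕ → Bool) (n : ℕ) : Irrational (Tom c ω n x) ∧ Tom c ω n x ∈ Icc c 1 := by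
  induction n with
  | zero => exact ⟨hxi, hx⟩
  | succ n ih => exact Tc_mapsTo hc0 hc (ω n) ih

section

variable (hc0 : 0 < c) (hc : c ≤ 2 / 5) (hxi : Irrational x) (hx : x ∈ Icc c 1)
include hc0 hc hxi hx

lemma exists_switch_time (ω : ℕ → Bool) (N : ℕ) : ∃ n, N ≤ n ∧ Tom c ω n x ∈ SwitchS c := by
  have hmem := Tom_mem hc0 (by linarith) hxi hx ω
  obtain ⟨k, hk⟩ := exists_iterate_mem_switchS hc0 hc (hmem N).1 (hmem N).2
  induction k generalizing N with
  | zero => exact ⟨N, le_rfl, hk⟩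
  | succ k ih =>
    by_cases hS : Tom c ω N x ∈ SwitchS c
    · exact ⟨N, le_rfl, hS⟩
    have hstep : Tom c ω (N + 1) x = Tc false c (Tom c ω N x) :=
      Tc_eq_Tc_false_of_not_mem_switchS hc0 (by linarith) (hmem N).1 (hmem N).2 hS (ω N)
    rw [Function.iterate_succ_apply, ← hstep] at hk
    obtain ⟨n, hn, hnS⟩ := ih (N + 1) hk
    exact ⟨n, by omega, hnS⟩

lemma exists_expansion_update_ne (ω : ℕ → Bool) (N : ℕ) :
    ∃ n, N ≤ n ∧ expansion c (Function.update ω n (!ω n)) x n ≠ expansion c ω x n := by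
  obtain ⟨n, hNn, hS⟩ := exists_switch_time hc0 hc hxi hx ω N
  have hS' : Tom c (Function.update ω n (!ω n)) n x ∈ SwitchS c := by
    rwa [Tom_congr fun i hi => Function.update_of_ne hi.ne _ _]
  refine ⟨n, hNn, fun h => ?_⟩
  have hsgn := congrArg Prod.fst h
  simp only [expansion] at hsgn
  rw [sgn_of_mem_switchS hc0 hS, sgn_of_mem_switchS hc0 hS', Function.update_self] at hsgn
  revert hsgn
  cases ω n <;> decide

end

end CLuroth

/-- for `0 < c ≤ 2/5` every irrational `x ∈ [c,1]` has uncountably many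
different `c`-Lüroth expansions. -/
theorem irrational_uncountably_many_expansions (c : ℝ) (hc0 : 0 < c) (hc : c ≤ 2/5)
    (x : ℝ) (hx : x ∈ Set.Icc c 1) (hxi : Irrational x) :
    ¬ Set.Countable {e : ℕ → ℕ × ℕ | ∃ ω : ℕ → Bool, expansion c ω x = e} :=
  not_countable_range_of_branching (fun ω => expansion c ω x)
    (fun _ _ _ h => CLuroth.expansion_congr h)
    (CLuroth.exists_expansion_update_ne hc0 hc hxi hx)
end
end

section
/- Let c ∈ (0,1/2) and let ((s_n, d_n))_{n≥1} be a c-Lüroth admissible sequence, and put x = Σ_{n≥1} (−1)^{s_1+⋯+s_{n−1}} (d_n − 1 + s_n)/∏_{i=1}^{n} d_i(d_i−1). If s_1 = 0 then x ∈ [1/d_1 + c/(d_1(d_1−1)), 1/(d_1−1)]; if s_1 = 1 then x ∈ [1/d_1, 1/(d_1−1) − c/(d_1(d_1−1))]. -/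
open MeasureTheory Filter Set
open scoped Classical ENNReal

noncomputable section

/-! Peeling off the first digit writes the value as `(d₁ - 1 + s₁ + (-1)^{s₁} y) / (d₁(d₁ - 1))`,
where `y` is the value of the shifted sequence. Admissibility puts `y` in `[c, 1]`, and the two
intervals of the theorem are the images of `[c, 1]` under these affine inverse branches. -/

def lurothTerm (a : ℕ → ℕ × ℕ) (n : ℕ) : ℝ :=
  (-1 : ℝ) ^ (∑ i ∈ Finset.range n, (a i).1) *
    (((a n).2 : ℝ) - 1 + ((a n).1 : ℝ)) /
    (∏ i ∈ Finset.range (n+1), (((a i).2 : ℝ) * (((a i).2 : ℝ) - 1)))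

lemma lurothSum_eq_tsum_lurothTerm (a : ℕ → ℕ × ℕ) : lurothSum a = ∑' n, lurothTerm a n := rfl

def lurothBranch (s d : ℕ) (y : ℝ) : ℝ :=
  ((d : ℝ) - 1 + s + (-1) ^ s * y) / (d * (d - 1))

lemma lurothTerm_zero (a : ℕ → ℕ × ℕ) :
    lurothTerm a 0 = (((a 0).2 : ℝ) - 1 + (a 0).1) / ((a 0).2 * ((a 0).2 - 1)) := by
  simp [lurothTerm]

lemma lurothTerm_succ (a : ℕ → ℕ × ℕ) (n : ℕ) :
    lurothTerm a (n + 1) =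
      (-1) ^ (a 0).1 / ((a 0).2 * ((a 0).2 - 1)) * lurothTerm (fun k => a (k + 1)) n := by
  simp only [lurothTerm, Finset.sum_range_succ' _ n, Finset.prod_range_succ' _ (n + 1), pow_add,
    div_eq_mul_inv, mul_inv]
  ring

section

variable {a : ℕ → ℕ × ℕ} (hs : ∀ n, (a n).1 ≤ 1) (hd : ∀ n, 2 ≤ (a n).2)
include hs hd

lemma abs_lurothTerm_le (n : ℕ) : |lurothTerm a n| ≤ (1 / 2) ^ n := by
  induction n generalizing a with
  | zero =>
    have hd0 : (2 : ℝ) ≤ (a 0).2 := mod_cast hd 0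
    have hs0 : ((a 0).1 : ℝ) ≤ 1 := mod_cast hs 0
    have hnum : (0 : ℝ) ≤ (a 0).2 - 1 + (a 0).1 := by linarith [(a 0).1.cast_nonneg (α := ℝ)]
    rw [lurothTerm_zero, pow_zero, abs_of_nonneg (div_nonneg hnum (by nlinarith))]
    exact div_le_one_of_le₀ (by nlinarith) (by nlinarith)
  | succ n ih =>
    have hd0 : (2 : ℝ) ≤ (a 0).2 := mod_cast hd 0
    have hfactor : |(-1 : ℝ) ^ (a 0).1 / ((a 0).2 * ((a 0).2 - 1))| ≤ 1 / 2 := by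
      rw [abs_div, abs_pow, abs_neg, abs_one, one_pow, abs_of_pos (by nlinarith)]
      exact div_le_div_of_nonneg_left zero_le_one two_pos (by nlinarith)
    rw [lurothTerm_succ, abs_mul, pow_succ']
    exact mul_le_mul hfactor (ih (fun k => hs (k + 1)) (fun k => hd (k + 1)))
      (abs_nonneg _) (by norm_num)

lemma summable_lurothTerm : Summable (lurothTerm a) :=
  Summable.of_norm_bounded summable_geometric_two (abs_lurothTerm_le hs hd)

lemma lurothSum_eq_lurothBranch :
    lurothSum a = lurothBranch (a 0).1 (a 0).2 (lurothSum fun n => a (n + 1)) := by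
  rw [lurothSum_eq_tsum_lurothTerm, (summable_lurothTerm hs hd).tsum_eq_zero_add,
    lurothTerm_zero]
  simp only [lurothTerm_succ, tsum_mul_left, lurothBranch, lurothSum_eq_tsum_lurothTerm]
  ring

end

section

variable {c y : ℝ} {d : ℕ} (hd : 2 ≤ d) (hy : y ∈ Icc c 1)
include hd hy

lemma lurothBranch_zero_mem_Icc :
    lurothBranch 0 d y ∈ Icc (1 / (d : ℝ) + c / (d * (d - 1))) (1 / ((d : ℝ) - 1)) := by
  have hd' : (2 : ℝ) ≤ d := mod_cast hd
  have hpos : (0 : ℝ) < d * (d - 1) := by nlinarith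
  have hd1 : (d : ℝ) - 1 ≠ 0 := by linarith
  simp only [lurothBranch, pow_zero, one_mul, Nat.cast_zero, add_zero]
  constructor
  · calc 1 / (d : ℝ) + c / (d * (d - 1)) = (d - 1 + c) / (d * (d - 1)) := by
          field_simp
      _ ≤ _ := by gcongr; exact hy.1
  · calc ((d : ℝ) - 1 + y) / (d * (d - 1)) ≤ (d - 1 + 1) / (d * (d - 1)) := by
          gcongr; exact hy.2
      _ = 1 / ((d : ℝ) - 1) := by field_simp; ring

lemma lurothBranch_one_mem_Icc :
    lurothBranch 1 d y ∈ Icc (1 / (d : ℝ)) (1 / ((d : ℝ) - 1) - c / (d * (d - 1))) := by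
  have hd' : (2 : ℝ) ≤ d := mod_cast hd
  have hpos : (0 : ℝ) < d * (d - 1) := by nlinarith
  have hd1 : (d : ℝ) - 1 ≠ 0 := by linarith
  simp only [lurothBranch, pow_one, Nat.cast_one, neg_one_mul, ← sub_eq_add_neg]
  constructor
  · calc 1 / (d : ℝ) = (d - 1 + 1 - 1) / (d * (d - 1)) := by field_simp; ring
      _ ≤ _ := by gcongr; exact hy.2
  · calc ((d : ℝ) - 1 + 1 - y) / (d * (d - 1)) ≤ (d - 1 + 1 - c) / (d * (d - 1)) := by
          gcongr; exact hy.1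
      _ = 1 / ((d : ℝ) - 1) - c / (d * (d - 1)) := by field_simp; ring

end

theorem admissible_value_location_general (c : ℝ)
    (a : ℕ → ℕ × ℕ) (ha : Admissible c a) :
    ((a 0).1 = 0 →
      lurothSum a ∈ Set.Icc
        (1 / ((a 0).2 : ℝ) + c / (((a 0).2 : ℝ) * (((a 0).2 : ℝ) - 1)))
        (1 / (((a 0).2 : ℝ) - 1))) ∧
    ((a 0).1 = 1 →
      lurothSum a ∈ Set.Icc
        (1 / ((a 0).2 : ℝ))
        (1 / (((a 0).2 : ℝ) - 1) - c / (((a 0).2 : ℝ) * (((a 0).2 : ℝ) - 1)))) := by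
  obtain ⟨hrange, htails, -⟩ := ha
  have hs : ∀ n, (a n).1 ≤ 1 := fun n => (hrange n).1
  have hd : ∀ n, 2 ≤ (a n).2 := fun n => (hrange n).2.1
  have htail : lurothSum (fun n => a (n + 1)) ∈ Icc c 1 := by
    simpa only [add_comm 1] using htails 1
  rw [lurothSum_eq_lurothBranch hs hd]
  refine ⟨fun h0 => ?_, fun h1 => ?_⟩
  · rw [h0]
    exact lurothBranch_zero_mem_Icc (hd 0) htail
  · rw [h1]
    exact lurothBranch_one_mem_Icc (hd 0) htail

/-- the first sign of a `c`-Lüroth admissible sequence locates its value. -/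
theorem admissible_value_location (c : ℝ) (hc0 : 0 < c) (hc : c < 1/2)
    (a : ℕ → ℕ × ℕ) (ha : Admissible c a) :
    ((a 0).1 = 0 →
      lurothSum a ∈ Set.Icc
        (1 / ((a 0).2 : ℝ) + c / (((a 0).2 : ℝ) * (((a 0).2 : ℝ) - 1)))
        (1 / (((a 0).2 : ℝ) - 1))) ∧
    ((a 0).1 = 1 →
      lurothSum a ∈ Set.Icc
        (1 / ((a 0).2 : ℝ))
        (1 / (((a 0).2 : ℝ) - 1) - c / (((a 0).2 : ℝ) * (((a 0).2 : ℝ) - 1)))) :=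
  admissible_value_location_general c a ha
end
end

section
/- Let 0 < c ≤ 2/5. For every irrational x ∈ [c,1] and every ω ∈ {0,1}^ℕ there exists n ≥ 0 such that T_ω^n(x) ∈ S. -/
open MeasureTheory Filter Set
open scoped Classical ENNReal

noncomputable section

/-!
Off the switch region both maps `T_{0,c}` and `T_{1,c}` use the same branch: on `(z_d, z_{d-1})`
this is `T_A` below `z_d⁺` and `T_L` above `z_{d-1}⁻`, and these breakpoints are exactly the
preimages of `1 - c`. So an orbit avoiding `S` lies in `(1 - c, 1)` from the first step on, where
the digit is `2` and the orbit moves either on `(1 - c, (1 + c)/2)` by `y ↦ 2 - 2y` or on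
`(1 - c/2, 1)` by `y ↦ 2y - 1`. For `c ≤ 2/5` the left piece is invariant, and the two maps double
the distance to their fixed points `2/3` and `1`; a bounded orbit would therefore sit at a rational
fixed point, contradicting irrationality.
-/

variable {c y : ℝ} {d n : ℕ} {j : Bool}

lemma natCast_mul_sub_one_pos (hn : 2 ≤ n) : 0 < (n : ℝ) * (n - 1) := by
  have : (2 : ℝ) ≤ n := by exact_mod_cast hn
  nlinarith

lemma zp_eq (hn : 2 ≤ n) : zp c n = (n - 1 + c) / (n * (n - 1)) := by
  have : (2 : ℝ) ≤ n := by exact_mod_cast hn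
  rw [zp]
  field_simp [show (n : ℝ) - 1 ≠ 0 by linarith]

lemma zm_pred_eq (hn : 2 ≤ n) : zm c (n - 1) = (n - c) / (n * (n - 1)) := by
  have : (2 : ℝ) ≤ n := by exact_mod_cast hn
  rw [zm, Nat.cast_sub (by omega), Nat.cast_one, sub_add_cancel]
  field_simp [show (n : ℝ) - 1 ≠ 0 by linarith]

lemma one_div_natCast_eq (hn : 2 ≤ n) : 1 / (n : ℝ) = (n - 1) / (n * (n - 1)) := by
  have : (2 : ℝ) ≤ n := by exact_mod_cast hn
  field_simp [show (n : ℝ) - 1 ≠ 0 by linarith]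

lemma one_div_natCast_sub_one_eq (hn : 2 ≤ n) : 1 / ((n : ℝ) - 1) = n / (n * (n - 1)) := by
  have : (2 : ℝ) ≤ n := by exact_mod_cast hn
  field_simp [show (n : ℝ) - 1 ≠ 0 by linarith]

lemma zp_le_zm_pred (hc : c ≤ 1 / 2) (hn : 2 ≤ n) : zp c n ≤ zm c (n - 1) := by
  rw [zp_eq hn, zm_pred_eq hn]
  exact div_le_div_of_nonneg_right (by linarith) (natCast_mul_sub_one_pos hn).le

lemma zp_le_one_div_pred (hc : c ≤ 1) (hn : 2 ≤ n) : zp c n ≤ 1 / ((n : ℝ) - 1) := by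
  rw [zp_eq hn, one_div_natCast_sub_one_eq hn]
  exact div_le_div_of_nonneg_right (by linarith) (natCast_mul_sub_one_pos hn).le

lemma zm_pred_le_one_div_pred (hc : 0 ≤ c) (hn : 2 ≤ n) :
    zm c (n - 1) ≤ 1 / ((n : ℝ) - 1) := by
  rw [zm_pred_eq hn, one_div_natCast_sub_one_eq hn]
  exact div_le_div_of_nonneg_right (by linarith) (natCast_mul_sub_one_pos hn).le

lemma one_div_le_zm_pred (hc : c ≤ 1) (hn : 2 ≤ n) : 1 / (n : ℝ) ≤ zm c (n - 1) := by
  rw [zm_pred_eq hn, one_div_natCast_eq hn]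
  exact div_le_div_of_nonneg_right (by linarith) (natCast_mul_sub_one_pos hn).le

lemma zp_two : zp c 2 = (1 + c) / 2 := by
  rw [zp_eq le_rfl]
  norm_num

lemma zm_one : zm c 1 = 1 - c / 2 := by
  rw [zm]; ring

lemma one_div_pred_le_one (hn : 2 ≤ n) : 1 / ((n : ℝ) - 1) ≤ 1 := by
  have : (2 : ℝ) ≤ n := by exact_mod_cast hn
  rw [div_le_one (by linarith)]
  linarith

lemma eq_of_mem_Icc_one_div_of_mem_Ioo_one_div (hn : 2 ≤ n) (hd : 2 ≤ d)
    (hyn : y ∈ Icc (1 / (n : ℝ)) (1 / ((n : ℝ) - 1)))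
    (hyd : y ∈ Ioo (1 / (d : ℝ)) (1 / ((d : ℝ) - 1))) : n = d := by
  have : (2 : ℝ) ≤ n := by exact_mod_cast hn
  have : (2 : ℝ) ≤ d := by exact_mod_cast hd
  have hdn : (d : ℝ) - 1 < n := by
    rw [← one_div_lt_one_div (by linarith) (by linarith)]
    exact hyn.1.trans_lt hyd.2
  have hnd : (n : ℝ) - 1 < d := by
    rw [← one_div_lt_one_div (by linarith) (by linarith)]
    exact hyd.1.trans_le hyn.2
  have : d < n + 1 := by exact_mod_cast (by linarith : (d : ℝ) < n + 1)
  have : n < d + 1 := by exact_mod_cast (by linarith : (n : ℝ) < d + 1)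
  omega

lemma Irrational.exists_mem_Ioo_one_div (hy : Irrational y) (h0 : 0 < y) (h1 : y < 1) :
    ∃ d : ℕ, 2 ≤ d ∧ y ∈ Ioo (1 / (d : ℝ)) (1 / ((d : ℝ) - 1)) := by
  set d := ⌈1 / y⌉₊
  have hinv : 1 < 1 / y := one_lt_one_div h0 h1
  have hle : 1 / y < d := (Nat.le_ceil _).lt_of_ne ((one_div y ▸ hy.inv).ne_nat d)
  have hlt : (d : ℝ) < 1 / y + 1 := Nat.ceil_lt_add_one (by positivity)
  have hd : 2 ≤ d := by
    have : 1 < d := by exact_mod_cast hinv.trans hle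
    omega
  have : (2 : ℝ) ≤ d := by exact_mod_cast hd
  exact ⟨d, hd, (one_div_lt (by linarith) h0).2 hle, (lt_one_div h0 (by linarith)).2 (by linarith)⟩

lemma TL_eq (hd : 2 ≤ d) (hy : y ∈ Ioo (1 / (d : ℝ)) (1 / ((d : ℝ) - 1))) :
    TL y = d * (d - 1) * y - (d - 1) := by
  have : (2 : ℝ) ≤ d := by exact_mod_cast hd
  have h0 : 0 < y := lt_trans (by positivity) hy.1
  have hceil : ⌈1 / y⌉ = (d : ℤ) := by
    rw [Int.ceil_eq_iff]
    push_cast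
    exact ⟨(lt_one_div h0 (by linarith)).1 hy.2, ((one_div_lt (by linarith) h0).1 hy.1).le⟩
  rw [TL, if_neg h0.ne', if_neg (hy.2.trans_le (one_div_pred_le_one hd)).ne, hceil]
  push_cast
  ring

lemma irrational_TL (hy : Irrational y) (h0 : 0 < y) (h1 : y < 1) : Irrational (TL y) := by
  obtain ⟨d, hd, hyd⟩ := hy.exists_mem_Ioo_one_div h0 h1
  have : TL y = ((d * (d - 1) : ℕ) : ℝ) * y - ((d - 1 : ℕ) : ℝ) := by
    rw [TL_eq hd hyd]
    push_cast [Nat.cast_sub (by omega : 1 ≤ d)]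
    ring
  rw [this]
  exact (hy.natCast_mul (Nat.mul_ne_zero (by omega) (by omega))).sub_natCast _

lemma irrational_TA (hy : Irrational y) (h0 : 0 < y) (h1 : y < 1) : Irrational (TA y) := by
  rw [TA]
  exact_mod_cast (irrational_TL hy h0 h1).natCast_sub 1

lemma Tc_eq_TA_or_TL (hc : c ≠ 0) (hy : y ≠ 1) : Tc j c y = TA y ∨ Tc j c y = TL y := by
  rw [Tc, if_neg (fun h => hc h.1), if_neg hy]
  split_ifs <;> simp

lemma irrational_Tc (hc : c ≠ 0) (hy : Irrational y) (h0 : 0 < y) (h1 : y < 1) :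
    Irrational (Tc j c y) := by
  rcases Tc_eq_TA_or_TL (j := j) hc h1.ne with h | h <;> rw [h]
  exacts [irrational_TA hy h0 h1, irrational_TL hy h0 h1]

lemma Tc_eq_TA (hc0 : 0 < c) (hc : c ≤ 1 / 2) (hd : 2 ≤ d) (h1 : 1 / (d : ℝ) < y)
    (h2 : y < zp c d) : Tc j c y = TA y := by
  have hy1 : y < 1 :=
    h2.trans_le ((zp_le_one_div_pred (by linarith) hd).trans (one_div_pred_le_one hd))
  rw [Tc, if_neg (fun h => hc0.ne' h.1), if_neg hy1.ne, if_pos]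
  cases j
  · exact Or.inl ⟨rfl, d, hd, h1.le, h2⟩
  · exact Or.inr ⟨rfl, d, hd, h1.le, h2.le.trans (zp_le_zm_pred hc hd)⟩

lemma Tc_eq_TL (hc0 : 0 < c) (hc : c ≤ 1 / 2) (hd : 2 ≤ d) (h1 : zm c (d - 1) < y)
    (h2 : y < 1 / ((d : ℝ) - 1)) : Tc j c y = TL y := by
  have hyd : y ∈ Ioo (1 / (d : ℝ)) (1 / ((d : ℝ) - 1)) :=
    ⟨(one_div_le_zm_pred (by linarith) hd).trans_lt h1, h2⟩
  rw [Tc, if_neg (fun h => hc0.ne' h.1), if_neg (h2.trans_le (one_div_pred_le_one hd)).ne,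
    if_neg]
  rintro (⟨-, n, hn, hny, hyn⟩ | ⟨-, n, hn, hny, hyn⟩)
  · obtain rfl := eq_of_mem_Icc_one_div_of_mem_Ioo_one_div hn hd
      ⟨hny, hyn.le.trans (zp_le_one_div_pred (by linarith) hn)⟩ hyd
    linarith [zp_le_zm_pred hc hn]
  · obtain rfl := eq_of_mem_Icc_one_div_of_mem_Ioo_one_div hn hd
      ⟨hny, hyn.trans (zm_pred_le_one_div_pred hc0.le hn)⟩ hyd
    linarith

lemma TA_mem_Ioo (hc : c ≤ 1) (hd : 2 ≤ d) (h1 : 1 / (d : ℝ) < y) (h2 : y < zp c d) :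
    TA y ∈ Ioo (1 - c) 1 := by
  have hD := natCast_mul_sub_one_pos hd
  rw [TA, TL_eq hd ⟨h1, h2.trans_le (zp_le_one_div_pred hc hd)⟩]
  rw [one_div_natCast_eq hd, div_lt_iff₀' hD] at h1
  rw [zp_eq hd, lt_div_iff₀' hD] at h2
  constructor <;> linarith

lemma TL_mem_Ioo (hc : c ≤ 1) (hd : 2 ≤ d) (h1 : zm c (d - 1) < y)
    (h2 : y < 1 / ((d : ℝ) - 1)) : TL y ∈ Ioo (1 - c) 1 := by
  have hD := natCast_mul_sub_one_pos hd
  rw [TL_eq hd ⟨(one_div_le_zm_pred hc hd).trans_lt h1, h2⟩]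
  rw [zm_pred_eq hd, div_lt_iff₀' hD] at h1
  rw [one_div_natCast_sub_one_eq hd, lt_div_iff₀' hD] at h2
  constructor <;> linarith

lemma Tc_mem_Ioo_of_notMem_switchS (hc0 : 0 < c) (hc : c ≤ 1 / 2) (hy : y ∈ Icc c 1)
    (hyi : Irrational y) (hS : y ∉ SwitchS c) : Tc j c y ∈ Ioo (1 - c) 1 := by
  obtain ⟨d, hd, hyd⟩ :=
    hyi.exists_mem_Ioo_one_div (hc0.trans_le hy.1) (hy.2.lt_of_ne hyi.ne_one)
  rcases lt_or_ge y (zp c d) with hp | hp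
  · rw [Tc_eq_TA hc0 hc hd hyd.1 hp]
    exact TA_mem_Ioo (by linarith) hd hyd.1 hp
  · have hm : zm c (d - 1) < y := lt_of_not_ge fun hm => hS ⟨hy, d, hd, hp, hm⟩
    rw [Tc_eq_TL hc0 hc hd hm hyd.2]
    exact TL_mem_Ioo (by linarith) hd hm hyd.2

lemma mem_union_of_notMem_switchS (hc : c ≤ 1 / 2) (hy : y ∈ Ioo (1 - c) 1)
    (hS : y ∉ SwitchS c) : y ∈ Ioo (1 - c) ((1 + c) / 2) ∪ Ioo (1 - c / 2) 1 := by
  rcases lt_or_ge y ((1 + c) / 2) with hl | hl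
  · exact Or.inl ⟨hy.1, hl⟩
  rcases lt_or_ge (1 - c / 2) y with hr | hr
  · exact Or.inr ⟨hr, hy.2⟩
  exact absurd ⟨⟨by linarith [hy.1], hy.2.le⟩, 2, le_rfl, zp_two ▸ hl, zm_one ▸ hr⟩ hS

lemma Tc_eq_two_sub_two_mul (hc0 : 0 < c) (hc : c ≤ 1 / 2) (hy : y ∈ Ioo (1 - c) ((1 + c) / 2)) :
    Tc j c y = 2 - 2 * y := by
  have h1 : 1 / ((2 : ℕ) : ℝ) < y := by norm_num; linarith [hy.1]
  have h2 : y < zp c 2 := zp_two ▸ hy.2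
  rw [Tc_eq_TA hc0 hc le_rfl h1 h2, TA,
    TL_eq le_rfl ⟨h1, h2.trans_le (zp_le_one_div_pred (by linarith) le_rfl)⟩]
  norm_num
  ring

lemma Tc_eq_two_mul_sub_one (hc0 : 0 < c) (hc : c ≤ 1 / 2) (hy : y ∈ Ioo (1 - c / 2) 1) :
    Tc j c y = 2 * y - 1 := by
  have h1 : zm c (2 - 1) < y := zm_one ▸ hy.1
  have h2 : y < 1 / (((2 : ℕ) : ℝ) - 1) := by norm_num [hy.2]
  rw [Tc_eq_TL hc0 hc le_rfl h1 h2,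
    TL_eq le_rfl ⟨(one_div_le_zm_pred (by linarith) le_rfl).trans_lt h1, h2⟩]
  norm_num

lemma eq_zero_of_expanding_of_bounded {u : ℕ → ℝ} {r B : ℝ} (hr : 1 < r)
    (hexp : ∀ n, r * |u n| ≤ |u (n + 1)|) (hB : ∀ n, |u n| ≤ B) : u 0 = 0 := by
  have hpow : ∀ n, r ^ n * |u 0| ≤ |u n| := by
    intro n
    induction n with
    | zero => simp
    | succ n ih =>
      calc r ^ (n + 1) * |u 0| = r * (r ^ n * |u 0|) := by ring
        _ ≤ r * |u n| := by gcongr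
        _ ≤ |u (n + 1)| := hexp n
  by_contra h0
  have hpos : 0 < |u 0| := abs_pos.mpr h0
  obtain ⟨n, hn⟩ := pow_unbounded_of_one_lt (B / |u 0|) hr
  rw [div_lt_iff₀ hpos] at hn
  linarith [hpow n, hB n]

lemma exists_eq_two_thirds (hc0 : 0 < c) (hc : c ≤ 2 / 5) {u : ℕ → ℝ} {ω : ℕ → Bool}
    (hu : ∀ n, u (n + 1) = Tc (ω n) c (u n))
    (hsplit : ∀ n, u n ∈ Ioo (1 - c) ((1 + c) / 2) ∪ Ioo (1 - c / 2) 1) :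
    ∃ n, u n = 2 / 3 := by
  set L := Ioo (1 - c) ((1 + c) / 2)
  have hIoo : ∀ n, u n ∈ Ioo (1 - c) 1 := fun n =>
    (hsplit n).elim (fun h => ⟨h.1, by linarith [h.2]⟩) fun h => ⟨by linarith [h.1], h.2⟩
  have hleft : ∀ n, u n ∈ L → u (n + 1) = 2 - 2 * u n := fun n h =>
    (hu n).trans (Tc_eq_two_sub_two_mul hc0 (by linarith) h)
  -- `L` is invariant: its image lies below `2c ≤ 1 - c/2`, which is where `c ≤ 2/5` enters.
  have hstay : ∀ n, u n ∈ L → u (n + 1) ∈ L := fun n h =>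
    (hsplit (n + 1)).resolve_right fun hR => by linarith [hleft n h, h.1, hR.1]
  obtain ⟨m, hm⟩ : ∃ m, u m ∈ L := by
    by_contra! hR
    have hright : ∀ n, u (n + 1) = 2 * u n - 1 := fun n =>
      (hu n).trans (Tc_eq_two_mul_sub_one hc0 (by linarith) ((hsplit n).resolve_left (hR n)))
    have h1 := eq_zero_of_expanding_of_bounded (u := fun n => 1 - u n) (B := 1) one_lt_two
      (fun n => by
        rw [hright n, show 1 - (2 * u n - 1) = 2 * (1 - u n) by ring, abs_mul, abs_two])
      (fun n => abs_le.mpr ⟨by linarith [(hIoo n).2], by linarith [(hIoo n).1]⟩)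
    linarith [(hIoo 0).2]
  have hmL : ∀ k, u (m + k) ∈ L := fun k => Nat.rec hm (fun k ih => hstay (m + k) ih) k
  refine ⟨m, ?_⟩
  have h := eq_zero_of_expanding_of_bounded (u := fun k => u (m + k) - 2 / 3) (B := 1)
    one_lt_two
    (fun k => by
      rw [← add_assoc, hleft _ (hmL k),
        show 2 - 2 * u (m + k) - 2 / 3 = -2 * (u (m + k) - 2 / 3) by ring, abs_mul]
      norm_num)
    (fun k => abs_le.mpr ⟨by linarith [(hmL k).1], by linarith [(hmL k).2]⟩)
  simp only [add_zero] at h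
  linarith

/-- for `0 < c ≤ 2/5` every random orbit of an irrational `x ∈ [c,1]`
enters the switch region. -/
theorem orbit_enters_switch_region (c : ℝ) (hc0 : 0 < c) (hc : c ≤ 2/5)
    (x : ℝ) (hx : x ∈ Set.Icc c 1) (hxi : Irrational x) (ω : ℕ → Bool) :
    ∃ n : ℕ, Tom c ω n x ∈ SwitchS c := by
  by_contra! hS
  have hstep : ∀ n, Tom c ω n x ∈ Icc c 1 → Irrational (Tom c ω n x) →
      Tom c ω (n + 1) x ∈ Ioo (1 - c) 1 := fun n hy hyi =>
    Tc_mem_Ioo_of_notMem_switchS hc0 (by linarith) hy hyi (hS n)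
  have horbit : ∀ n, Tom c ω n x ∈ Icc c 1 ∧ Irrational (Tom c ω n x) := by
    intro n
    induction n with
    | zero => exact ⟨hx, hxi⟩
    | succ n ih =>
      have h := hstep n ih.1 ih.2
      exact ⟨⟨by linarith [h.1], h.2.le⟩,
        irrational_Tc hc0.ne' ih.2 (hc0.trans_le ih.1.1) (ih.1.2.lt_of_ne ih.2.ne_one)⟩
  obtain ⟨n, hn⟩ := exists_eq_two_thirds hc0 hc (u := fun n => Tom c ω (n + 1) x)
    (ω := fun n => ω (n + 1)) (fun n => rfl) fun n =>
      mem_union_of_notMem_switchS (by linarith)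
        (hstep n (horbit n).1 (horbit n).2) (hS (n + 1))
  exact (horbit (n + 1)).2.ne_rat (2 / 3) (by simpa using hn)
end
end

section
/- Let c = 1/ℓ for some integer ℓ ≥ 3. Then the random c-Lüroth transformation has the random covering property: for every interval J ⊆ [c,1] of positive length there exist n ≥ 1 and ω ∈ {0,1}^ℕ such that T_ω^n(J) = [c,1]. -/
open MeasureTheory Filter Set
open scoped Classical ENNReal

noncomputable section

/-!
On the branch `[1/n, 1/(n-1)]` the maps `T_L` and `T_A` are affine with slopes `±n(n-1)`, and
`T_{0,c}`, `T_{1,c}` agree except on the switch interval `[z_n⁺, z_{n-1}⁻]`, where `T_{0,c}` acts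
as `T_L` and `T_{1,c}` as `T_A`. Both maps preserve `[c, 1]`. If an interval contains a switch
interval, `T_{0,c}` maps it onto `[c, 1 - c] ⊇ [1/3, z_2⁻]`, and `T_{1,c}` maps `[1/3, z_2⁻]`
onto `[c, 1]`. Otherwise one of the two maps is affine on a large enough piece of it to stretch
it by a factor `3/2`; since lengths stay below `1`, after finitely many steps the interval
contains a switch interval.
-/

lemma surjOn_Icc_uIcc_of_eqOn_affine {f : ℝ → ℝ} {a b x y : ℝ} (hxy : x ≤ y)
    (hf : EqOn f (fun t => a * t + b) (Icc x y)) : SurjOn f (Icc x y) (uIcc (f x) (f y)) := by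
  have hcont : ContinuousOn f (Icc x y) := by
    refine ContinuousOn.congr ?_ hf
    fun_prop
  rw [← uIcc_of_le hxy] at hcont ⊢
  exact intermediate_value_uIcc hcont

namespace RandomLuroth

variable {c : ℝ} {n : ℕ} {x y : ℝ}

lemma zm_pred (hn : 1 ≤ n) :
    zm c (n - 1) = 1 / ((n : ℝ) - 1) - c * (1 / ((n : ℝ) - 1)) * (1 / n) := by
  rw [zm, Nat.cast_sub hn]
  ring

lemma zm_two : zm c 2 = 1 / 2 - c / 6 := by
  rw [zm]
  ring

lemma one_div_pred_le_one (hn : 2 ≤ n) : 1 / ((n : ℝ) - 1) ≤ 1 := by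
  have : (2 : ℝ) ≤ n := by exact_mod_cast hn
  rw [div_le_one (by linarith)]
  linarith

/- On the branch `[1/n, 1/(n-1))`, `T_L x = n(n-1)x - (n-1)` and `T_A x = n - n(n-1)x`, so
everything is read off from the values of `n(n-1)x` at the partition points. -/
lemma branch_scale_pos (hn : 2 ≤ n) : 0 < (n : ℝ) * (n - 1) := by
  have : (2 : ℝ) ≤ n := by exact_mod_cast hn
  nlinarith

lemma scale_one_div (hn : 2 ≤ n) : (n : ℝ) * (n - 1) * (1 / n) = n - 1 := by
  have : (2 : ℝ) ≤ n := by exact_mod_cast hn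
  field_simp

lemma scale_one_div_pred (hn : 2 ≤ n) : (n : ℝ) * (n - 1) * (1 / ((n : ℝ) - 1)) = n := by
  have : (2 : ℝ) ≤ n := by exact_mod_cast hn
  have : (n : ℝ) - 1 ≠ 0 := by linarith
  field_simp

lemma scale_zp (hn : 2 ≤ n) : (n : ℝ) * (n - 1) * zp c n = n - 1 + c := by
  have : (2 : ℝ) ≤ n := by exact_mod_cast hn
  have : (n : ℝ) - 1 ≠ 0 := by linarith
  rw [zp]
  field_simp

lemma scale_zm (hn : 2 ≤ n) : (n : ℝ) * (n - 1) * zm c (n - 1) = n - c := by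
  have : (2 : ℝ) ≤ n := by exact_mod_cast hn
  have : (n : ℝ) - 1 ≠ 0 := by linarith
  rw [zm_pred (by omega)]
  field_simp

lemma lt_of_scale_lt (hn : 2 ≤ n) {a b : ℝ} (h : (n : ℝ) * (n - 1) * a < n * (n - 1) * b) :
    a < b :=
  lt_of_mul_lt_mul_left h (branch_scale_pos hn).le

lemma one_div_lt_zp (hc : 0 < c) (hn : 2 ≤ n) : 1 / (n : ℝ) < zp c n :=
  lt_of_scale_lt hn (by rw [scale_one_div hn, scale_zp hn]; linarith)

lemma zp_lt_one_div_pred (hc : c < 1) (hn : 2 ≤ n) : zp c n < 1 / ((n : ℝ) - 1) :=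
  lt_of_scale_lt hn (by rw [scale_zp hn, scale_one_div_pred hn]; linarith)

lemma one_div_lt_zm (hc : c < 1) (hn : 2 ≤ n) : 1 / (n : ℝ) < zm c (n - 1) :=
  lt_of_scale_lt hn (by rw [scale_one_div hn, scale_zm hn]; linarith)

lemma zm_lt_one_div_pred (hc : 0 < c) (hn : 2 ≤ n) : zm c (n - 1) < 1 / ((n : ℝ) - 1) :=
  lt_of_scale_lt hn (by rw [scale_zm hn, scale_one_div_pred hn]; linarith)

lemma zp_lt_zm (hc : c < 1 / 2) (hn : 2 ≤ n) : zp c n < zm c (n - 1) :=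
  lt_of_scale_lt hn (by rw [scale_zp hn, scale_zm hn]; linarith)

lemma ceil_one_div_eq (hn : 2 ≤ n) (h₁ : 1 / (n : ℝ) ≤ x) (h₂ : x < 1 / ((n : ℝ) - 1)) :
    ⌈1 / x⌉ = n := by
  have hn' : (2 : ℝ) ≤ n := by exact_mod_cast hn
  have hx : 0 < x := lt_of_lt_of_le (by positivity) h₁
  rw [Int.ceil_eq_iff, Int.cast_natCast]
  constructor
  · rw [lt_one_div (by linarith) hx]
    exact h₂
  · rwa [one_div_le hx (by positivity)]

lemma eq_of_mem_branch {m : ℕ} (hm : 2 ≤ m) (hn : 2 ≤ n)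
    (hm₁ : 1 / (m : ℝ) ≤ x) (hm₂ : x < 1 / ((m : ℝ) - 1))
    (hn₁ : 1 / (n : ℝ) ≤ x) (hn₂ : x < 1 / ((n : ℝ) - 1)) : m = n := by
  have := (ceil_one_div_eq hm hm₁ hm₂).symm.trans (ceil_one_div_eq hn hn₁ hn₂)
  exact_mod_cast this

lemma exists_mem_branch (h₀ : 0 < x) (h₁ : x < 1) :
    ∃ n : ℕ, 2 ≤ n ∧ 1 / (n : ℝ) ≤ x ∧ x < 1 / ((n : ℝ) - 1) := by
  have hx : 1 < 1 / x := by rwa [lt_one_div one_pos h₀, div_one]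
  obtain ⟨n, hn⟩ : ∃ n : ℕ, ⌈1 / x⌉ = n := Int.eq_ofNat_of_zero_le (by positivity)
  have hceil₁ : (n : ℝ) - 1 < 1 / x := by
    have := Int.ceil_lt_add_one (1 / x)
    rw [hn, Int.cast_natCast] at this
    linarith
  have hceil₂ : 1 / x ≤ n := by
    have := Int.le_ceil (1 / x)
    rwa [hn, Int.cast_natCast] at this
  have hn2 : 2 ≤ n := by
    have : (1 : ℝ) < n := hx.trans_le hceil₂
    have : 1 < n := by exact_mod_cast this
    omega
  refine ⟨n, hn2, ?_, ?_⟩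
  · rwa [one_div_le (by positivity) h₀]
  · rwa [lt_one_div h₀ (by linarith)]

lemma TL_eq_of_mem_branch (hn : 2 ≤ n) (h₁ : 1 / (n : ℝ) ≤ x)
    (h₂ : x < 1 / ((n : ℝ) - 1)) : TL x = n * (n - 1) * x + (1 - n) := by
  have hn' : (2 : ℝ) ≤ n := by exact_mod_cast hn
  have hx₀ : x ≠ 0 := (lt_of_lt_of_le (by positivity) h₁).ne'
  have hx₁ : x ≠ 1 := (h₂.trans_le (one_div_pred_le_one hn)).ne
  rw [TL, if_neg hx₀, if_neg hx₁, ceil_one_div_eq hn h₁ h₂, Int.cast_natCast]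
  ring

lemma Tc_one (hc : c ≠ 0) (j : Bool) : Tc j c 1 = 1 := by
  simp [Tc, hc]

lemma Tc_false_eq (hc : c ≠ 0) (hx : x ≠ 1) :
    Tc false c x = if ∃ n : ℕ, 2 ≤ n ∧ 1 / (n : ℝ) ≤ x ∧ x < zp c n then TA x else TL x := by
  simp [Tc, hc, hx]

lemma Tc_true_eq (hc : c ≠ 0) (hx : x ≠ 1) :
    Tc true c x = if ∃ n : ℕ, 2 ≤ n ∧ 1 / (n : ℝ) ≤ x ∧ x ≤ zm c (n - 1) then TA x else TL x := by
  simp [Tc, hc, hx]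

lemma Tc_false_of_lt_zp (hc₀ : 0 < c) (hc₁ : c < 1) (hn : 2 ≤ n)
    (h₁ : 1 / (n : ℝ) ≤ x) (h₂ : x < zp c n) : Tc false c x = -(n * (n - 1)) * x + n := by
  have h₂' := h₂.trans (zp_lt_one_div_pred hc₁ hn)
  rw [Tc_false_eq hc₀.ne' (h₂'.trans_le (one_div_pred_le_one hn)).ne, if_pos ⟨n, hn, h₁, h₂⟩,
    TA, TL_eq_of_mem_branch hn h₁ h₂']
  ring

lemma Tc_true_of_le_zm (hc₀ : 0 < c) (hn : 2 ≤ n)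
    (h₁ : 1 / (n : ℝ) ≤ x) (h₂ : x ≤ zm c (n - 1)) : Tc true c x = -(n * (n - 1)) * x + n := by
  have h₂' := h₂.trans_lt (zm_lt_one_div_pred hc₀ hn)
  rw [Tc_true_eq hc₀.ne' (h₂'.trans_le (one_div_pred_le_one hn)).ne, if_pos ⟨n, hn, h₁, h₂⟩,
    TA, TL_eq_of_mem_branch hn h₁ h₂']
  ring

lemma Tc_one_div (hc₀ : 0 < c) (hc₁ : c < 1) {m : ℕ} (hm : 1 ≤ m) (j : Bool) :
    Tc j c (1 / (m : ℝ)) = 1 := by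
  obtain rfl | hm := hm.eq_or_lt
  · simpa using Tc_one hc₀.ne' j
  have h₁ := scale_one_div hm
  cases j
  · rw [Tc_false_of_lt_zp hc₀ hc₁ hm le_rfl (one_div_lt_zp hc₀ hm)]
    linarith
  · rw [Tc_true_of_le_zm hc₀ hm le_rfl (one_div_lt_zm hc₁ hm).le]
    linarith

lemma Tc_one_div_pred (hc₀ : 0 < c) (hc₁ : c < 1) (hn : 2 ≤ n) (j : Bool) :
    Tc j c (1 / ((n : ℝ) - 1)) = 1 := by
  rw [← Nat.cast_pred (by omega)]
  exact Tc_one_div hc₀ hc₁ (by omega) j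

lemma Tc_false_of_zp_le (hc₀ : 0 < c) (hc₁ : c < 1) (hn : 2 ≤ n)
    (h₁ : zp c n ≤ x) (h₂ : x ≤ 1 / ((n : ℝ) - 1)) : Tc false c x = n * (n - 1) * x + (1 - n) := by
  obtain h₂ | rfl := h₂.lt_or_eq
  · have h₁' := (one_div_lt_zp hc₀ hn).le.trans h₁
    have hTA : ¬∃ m : ℕ, 2 ≤ m ∧ 1 / (m : ℝ) ≤ x ∧ x < zp c m := by
      rintro ⟨m, hm, hm₁, hm₂⟩
      obtain rfl := eq_of_mem_branch hm hn hm₁ (hm₂.trans (zp_lt_one_div_pred hc₁ hm)) h₁' h₂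
      exact hm₂.not_ge h₁
    rw [Tc_false_eq hc₀.ne' (h₂.trans_le (one_div_pred_le_one hn)).ne, if_neg hTA,
      TL_eq_of_mem_branch hn h₁' h₂]
  · rw [Tc_one_div_pred hc₀ hc₁ hn, scale_one_div_pred hn]
    ring

lemma Tc_true_of_zm_lt (hc₀ : 0 < c) (hc₁ : c < 1) (hn : 2 ≤ n)
    (h₁ : zm c (n - 1) < x) (h₂ : x ≤ 1 / ((n : ℝ) - 1)) :
    Tc true c x = n * (n - 1) * x + (1 - n) := by
  obtain h₂ | rfl := h₂.lt_or_eq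
  · have h₁' := (one_div_lt_zm hc₁ hn).le.trans h₁.le
    have hTA : ¬∃ m : ℕ, 2 ≤ m ∧ 1 / (m : ℝ) ≤ x ∧ x ≤ zm c (m - 1) := by
      rintro ⟨m, hm, hm₁, hm₂⟩
      obtain rfl := eq_of_mem_branch hm hn hm₁ (hm₂.trans_lt (zm_lt_one_div_pred hc₀ hm)) h₁' h₂
      exact hm₂.not_gt h₁
    rw [Tc_true_eq hc₀.ne' (h₂.trans_le (one_div_pred_le_one hn)).ne, if_neg hTA,
      TL_eq_of_mem_branch hn h₁' h₂]
  · rw [Tc_one_div_pred hc₀ hc₁ hn, scale_one_div_pred hn]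
    ring

lemma mapsTo_Tc (hc₀ : 0 < c) (hc : c ≤ 1 / 2) (j : Bool) :
    MapsTo (Tc j c) (Icc c 1) (Icc c 1) := by
  rintro x ⟨hcx, hx₁⟩
  obtain rfl | hx₁ := hx₁.eq_or_lt
  · rw [Tc_one hc₀.ne']
    exact ⟨hcx, le_rfl⟩
  obtain ⟨n, hn, h₁, h₂⟩ := exists_mem_branch (hc₀.trans_le hcx) hx₁
  have hκ := branch_scale_pos hn
  have s₁ := mul_le_mul_of_nonneg_left h₁ hκ.le
  have s₂ := mul_lt_mul_of_pos_left h₂ hκ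
  rw [scale_one_div hn] at s₁
  rw [scale_one_div_pred hn] at s₂
  cases j
  · by_cases h : x < zp c n
    · have s := mul_lt_mul_of_pos_left h hκ
      rw [scale_zp hn] at s
      rw [Tc_false_of_lt_zp hc₀ (by linarith) hn h₁ h]
      constructor <;> linarith
    · have s := mul_le_mul_of_nonneg_left (not_lt.1 h) hκ.le
      rw [scale_zp hn] at s
      rw [Tc_false_of_zp_le hc₀ (by linarith) hn (not_lt.1 h) h₂.le]
      constructor <;> linarith
  · by_cases h : x ≤ zm c (n - 1)
    · have s := mul_le_mul_of_nonneg_left h hκ.le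
      rw [scale_zm hn] at s
      rw [Tc_true_of_le_zm hc₀ hn h₁ h]
      constructor <;> linarith
    · have s := mul_lt_mul_of_pos_left (not_le.1 h) hκ
      rw [scale_zm hn] at s
      rw [Tc_true_of_zm_lt hc₀ (by linarith) hn (not_le.1 h) h₂.le]
      constructor <;> linarith

lemma mapsTo_Tom (hc₀ : 0 < c) (hc : c ≤ 1 / 2) (ω : ℕ → Bool) :
    ∀ n, MapsTo (Tom c ω n) (Icc c 1) (Icc c 1)
  | 0 => mapsTo_id _
  | n + 1 => (mapsTo_Tc hc₀ hc (ω n)).comp (mapsTo_Tom hc₀ hc ω n)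

def Stretches (c : ℝ) (s : Set ℝ) (L : ℝ) : Prop :=
  ∃ (j : Bool) (u v : ℝ), L ≤ v - u ∧ SurjOn (Tc j c) s (Icc u v)

def Covers (c : ℝ) (s : Set ℝ) : Prop :=
  ∃ (n : ℕ) (ω : ℕ → Bool), 1 ≤ n ∧ SurjOn (Tom c ω n) s (Icc c 1)

lemma Stretches.mono {s t : Set ℝ} {L L' : ℝ} (hst : s ⊆ t) (hL : L' ≤ L) :
    Stretches c s L → Stretches c t L'
  | ⟨j, u, v, hlen, h⟩ => ⟨j, u, v, hL.trans hlen, h.mono hst subset_rfl⟩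

lemma stretches_of_eqOn_affine {j : Bool} {a b : ℝ} (hxy : x ≤ y)
    (hf : EqOn (Tc j c) (fun t => a * t + b) (Icc x y)) :
    Stretches c (Icc x y) (|a| * (y - x)) := by
  refine ⟨j, _, _, le_of_eq ?_, surjOn_Icc_uIcc_of_eqOn_affine hxy hf⟩
  rw [max_sub_min_eq_abs, hf ⟨le_rfl, hxy⟩, hf ⟨hxy, le_rfl⟩,
    show a * y + b - (a * x + b) = a * (y - x) by ring, abs_mul, abs_of_nonneg (sub_nonneg.2 hxy)]

lemma switch_or_stretches_of_mem_branch (hc₀ : 0 < c) (hc₁ : c < 1) (hn : 2 ≤ n)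
    (hx : 1 / (n : ℝ) ≤ x) (hxy : x ≤ y) (hy : y ≤ 1 / ((n : ℝ) - 1)) :
    (x ≤ zp c n ∧ zm c (n - 1) ≤ y) ∨ Stretches c (Icc x y) (n * (n - 1) * (y - x)) := by
  have hκ := branch_scale_pos hn
  by_cases hyTA : y ≤ zm c (n - 1)
  · have := stretches_of_eqOn_affine (j := true) hxy
      fun t ht => Tc_true_of_le_zm hc₀ hn (hx.trans ht.1) (ht.2.trans hyTA)
    rw [abs_neg, abs_of_pos hκ] at this
    exact Or.inr this
  by_cases hxTL : zp c n ≤ x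
  · have := stretches_of_eqOn_affine (j := false) hxy
      fun t ht => Tc_false_of_zp_le hc₀ hc₁ hn (hxTL.trans ht.1) (ht.2.trans hy)
    rw [abs_of_pos hκ] at this
    exact Or.inr this
  exact Or.inl ⟨le_of_not_ge hxTL, le_of_not_ge hyTA⟩

lemma switch_or_stretches (hc₀ : 0 < c) (hc : c ≤ 1 / 3) (hcx : c ≤ x) (hxy : x < y)
    (hy : y ≤ 1) :
    (∃ m : ℕ, 2 ≤ m ∧ x ≤ zp c m ∧ zm c (m - 1) ≤ y) ∨ Stretches c (Icc x y) (3 / 2 * (y - x)) := by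
  obtain ⟨n, hn, hx₁, hx₂⟩ := exists_mem_branch (hc₀.trans_le hcx) (hxy.trans_le hy)
  have hn' : (2 : ℝ) ≤ n := by exact_mod_cast hn
  by_cases hyn : y ≤ 1 / ((n : ℝ) - 1)
  · refine (switch_or_stretches_of_mem_branch hc₀ (by linarith) hn hx₁ hxy.le hyn).imp
      (fun h => ⟨n, hn, h⟩) (Stretches.mono subset_rfl ?_)
    exact mul_le_mul_of_nonneg_right (by nlinarith) (sub_nonneg.2 hxy.le)
  -- Now `[x, y]` straddles `1/m`, `m = n - 1`. Either `[x, 1/m]` is a quarter of it and is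
  -- stretched by `(m+1)m ≥ 6`, or `[1/m, y]` is three quarters of it and, unless `[x, y]` contains
  -- the switch interval of branch `m`, lies in that branch and is stretched by `m(m-1) ≥ 2`.
  obtain ⟨m, rfl⟩ : ∃ m, n = m + 1 := ⟨n - 1, by omega⟩
  have hpred : ((m + 1 : ℕ) : ℝ) - 1 = m := by push_cast; ring
  rw [hpred, not_le] at hyn
  rw [hpred] at hx₂
  have hm : 2 ≤ m := by
    by_contra! hm
    obtain rfl : m = 1 := by omega
    norm_num at hyn
    linarith
  have hm' : (2 : ℝ) ≤ m := by exact_mod_cast hm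
  by_cases hgood : zm c (m - 1) ≤ y
  · exact Or.inl ⟨m, hm, hx₂.le.trans (one_div_lt_zp hc₀ hm).le, hgood⟩
  have hym : y ≤ 1 / ((m : ℝ) - 1) := (zm_lt_one_div_pred hc₀ hm).le.trans' (not_le.1 hgood).le
  by_cases hleft : (y - x) / 4 ≤ 1 / m - x
  · have h := switch_or_stretches_of_mem_branch hc₀ (by linarith) (n := m + 1) (by omega)
      hx₁ hx₂.le (by rw [hpred])
    rw [hpred, Nat.add_sub_cancel] at h
    refine h.imp (fun h => ⟨m + 1, by omega, h.1, h.2.trans hyn.le⟩)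
      (Stretches.mono (Icc_subset_Icc_right hyn.le) ?_)
    push_cast
    have : (6 : ℝ) ≤ (m + 1) * m := by nlinarith
    nlinarith [mul_le_mul_of_nonneg_right this (sub_nonneg.2 hx₂.le)]
  · refine (switch_or_stretches_of_mem_branch hc₀ (by linarith) hm le_rfl hyn.le hym).imp
      (fun h => ⟨m, hm, hx₂.le.trans h.1, h.2⟩) (Stretches.mono (Icc_subset_Icc_left hx₂.le) ?_)
    have : (2 : ℝ) ≤ m * (m - 1) := by nlinarith
    nlinarith [mul_le_mul_of_nonneg_right this (sub_nonneg.2 hyn.le)]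

lemma Covers.mono {s t : Set ℝ} (hst : s ⊆ t) : Covers c s → Covers c t
  | ⟨n, ω, hn, h⟩ => ⟨n, ω, hn, h.mono hst subset_rfl⟩

lemma covers_of_surjOn {j : Bool} {s : Set ℝ} (h : SurjOn (Tc j c) s (Icc c 1)) : Covers c s :=
  ⟨1, fun _ => j, le_rfl, h⟩

lemma Tom_cons (j : Bool) (ω : ℕ → Bool) :
    ∀ n x, Tom c (Stream'.cons j ω) (n + 1) x = Tom c ω n (Tc j c x)
  | 0, _ => rfl
  | n + 1, x => congrArg (Tc (ω n) c) (Tom_cons j ω n x)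

lemma Covers.of_surjOn {j : Bool} {s t : Set ℝ} (h : SurjOn (Tc j c) s t) :
    Covers c t → Covers c s
  | ⟨n, ω, _, hω⟩ => ⟨n + 1, Stream'.cons j ω, by omega, funext (Tom_cons j ω n) ▸ hω.comp h⟩

lemma covers_of_switch (hc₀ : 0 < c) (hc : c ≤ 1 / 3) {m : ℕ} (hm : 2 ≤ m)
    (hx : x ≤ zp c m) (hy : zm c (m - 1) ≤ y) : Covers c (Icc x y) := by
  have hc₁ : c < 1 := by linarith
  have hswitch : SurjOn (Tc false c) (Icc (zp c m) (zm c (m - 1))) (Icc (1 / 3) (zm c 2)) := by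
    have h := surjOn_Icc_uIcc_of_eqOn_affine (zp_lt_zm (by linarith) hm).le fun t ht =>
      Tc_false_of_zp_le hc₀ hc₁ hm ht.1 (ht.2.trans (zm_lt_one_div_pred hc₀ hm).le)
    rw [Tc_false_of_zp_le hc₀ hc₁ hm le_rfl (zp_lt_one_div_pred hc₁ hm).le,
      Tc_false_of_zp_le hc₀ hc₁ hm (zp_lt_zm (by linarith) hm).le
        (zm_lt_one_div_pred hc₀ hm).le, scale_zp hm, scale_zm hm] at h
    refine h.mono subset_rfl ((Icc_subset_Icc ?_ ?_).trans Icc_subset_uIcc) <;>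
      linarith [zm_two (c := c)]
  have hTA : SurjOn (Tc true c) (Icc (1 / 3) (zm c 2)) (Icc c 1) := by
    have hz : (1 : ℝ) / 3 ≤ zm c 2 := by linarith [zm_two (c := c)]
    have h := surjOn_Icc_uIcc_of_eqOn_affine (f := Tc true c) hz fun t ht =>
        Tc_true_of_le_zm (n := 3) hc₀ (by norm_num) (by exact_mod_cast ht.1) ht.2
    have h₁ : Tc true c (1 / 3) = 1 := by
      exact_mod_cast Tc_one_div hc₀ hc₁ (m := 3) (by norm_num) true
    have h₂ : Tc true c (zm c 2) = c := by
      rw [Tc_true_of_le_zm (n := 3) hc₀ (by norm_num) (by exact_mod_cast hz) le_rfl, zm_two]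
      push_cast
      ring
    rwa [h₁, h₂, uIcc_comm, uIcc_of_le hc₁.le] at h
  exact (Covers.of_surjOn hswitch (covers_of_surjOn hTA)).mono (Icc_subset_Icc hx hy)

lemma covers_of_pow_lt (hc₀ : 0 < c) (hc : c ≤ 1 / 3) :
    ∀ k : ℕ, ∀ {x y : ℝ}, c ≤ x → y ≤ 1 → (2 / 3 : ℝ) ^ k < y - x → Covers c (Icc x y)
  | 0, x, y, hcx, hy, hlen => by
    rw [pow_zero] at hlen
    linarith
  | k + 1, x, y, hcx, hy, hlen => by
    have hk := pow_pos (by norm_num : (0 : ℝ) < 2 / 3) (k + 1)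
    rcases switch_or_stretches hc₀ hc hcx (by linarith) hy with
      ⟨m, hm, hxm, hmy⟩ | ⟨j, u, v, hlen', hs⟩
    · exact covers_of_switch hc₀ hc hm hxm hmy
    have huv : u ≤ v := by linarith
    obtain ⟨hcu, hv⟩ := (Icc_subset_Icc_iff huv).1 <| hs.trans
      ((mapsTo_Tc hc₀ (by linarith) j).mono_left (Icc_subset_Icc hcx hy)).image_subset
    refine Covers.of_surjOn hs (covers_of_pow_lt hc₀ hc k hcu hv ?_)
    rw [pow_succ] at hlen
    linarith

lemma covers_Icc (hc₀ : 0 < c) (hc : c ≤ 1 / 3) (hcx : c ≤ x) (hxy : x < y) (hy : y ≤ 1) :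
    Covers c (Icc x y) :=
  let ⟨k, hk⟩ := exists_pow_lt_of_lt_one (sub_pos.2 hxy) (by norm_num : (2 / 3 : ℝ) < 1)
  covers_of_pow_lt hc₀ hc k hcx hy hk

end RandomLuroth

theorem random_covering_general (ℓ : ℕ) (hℓ : 3 ≤ ℓ) (c : ℝ) (hc : c = 1 / (ℓ : ℝ))
    (J : Set ℝ) (hJ : J ⊆ Set.Icc c 1)
    (hJlen : ∃ a b : ℝ, a < b ∧ Set.Ioo a b ⊆ J) :
    ∃ (n : ℕ) (ω : ℕ → Bool), 1 ≤ n ∧ Tom c ω n '' J = Set.Icc c 1 := by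
  obtain ⟨a, b, hab, hJab⟩ := hJlen
  have hℓ' : (3 : ℝ) ≤ ℓ := by exact_mod_cast hℓ
  have hc₀ : 0 < c := by rw [hc]; positivity
  have hc₃ : c ≤ 1 / 3 := by rw [hc]; gcongr
  set x := (2 * a + b) / 3 with hx
  set y := (a + 2 * b) / 3 with hy
  have hxy : x < y := by linarith
  have hsub : Icc x y ⊆ J := (Icc_subset_Ioo (by linarith) (by linarith)).trans hJab
  have hcx : c ≤ x := (hJ (hsub (left_mem_Icc.2 hxy.le))).1
  have hy1 : y ≤ 1 := (hJ (hsub (right_mem_Icc.2 hxy.le))).2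
  obtain ⟨n, ω, hn, hsurj⟩ := (RandomLuroth.covers_Icc hc₀ hc₃ hcx hxy hy1).mono hsub
  have himage := ((RandomLuroth.mapsTo_Tom hc₀ (by linarith) ω n).mono_left hJ).image_subset
  exact ⟨n, ω, hn, himage.antisymm hsurj⟩

/-- for `c = 1/ℓ`, `ℓ ≥ 3`, the random `c`-Lüroth transformation has the
random covering property. -/
theorem random_covering (ℓ : ℕ) (hℓ : 3 ≤ ℓ) (c : ℝ) (hc : c = 1 / (ℓ : ℝ))
    (J : Set ℝ) (hJ : J ⊆ Set.Icc c 1) (hJconn : J.OrdConnected)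
    (hJlen : ∃ a b : ℝ, a < b ∧ Set.Ioo a b ⊆ J) :
    ∃ (n : ℕ) (ω : ℕ → Bool), 1 ≤ n ∧ Tom c ω n '' J = Set.Icc c 1 :=
  random_covering_general ℓ hℓ c hc J hJ hJlen
end
end

section
/- Let c ∈ ℚ ∩ (0,1/2]. Then the full random orbit set O_c = {T_ω^n(c) : ω ∈ {0,1}^ℕ, n ≥ 0} ∪ {T_ω^n(1−c) : ω ∈ {0,1}^ℕ, n ≥ 0} is a finite set (hence the random c-Lüroth transformation L_c admits a finite Markov partition). -/
open MeasureTheory Filter Set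
open scoped Classical ENNReal

noncomputable section

/-!
Every branch of `T_{j,c}` is either the constant `1` or `x ↦ a x + b` with `a, b ∈ ℤ`, so the
whole random orbit of `x` lies in the additive group `ℤ x + ℤ`; it also stays in `[0,1]`. For
`c = p/q` both orbits therefore lie in `[0,1] ∩ (1/q)ℤ`, which is finite.
-/

open AddSubgroup

lemma one_le_ceil_one_div_mul {x : ℝ} (hx : 0 < x) : 1 ≤ (⌈1 / x⌉ : ℝ) * x := by
  have h := Int.le_ceil (1 / x)
  rwa [div_le_iff₀ hx] at h

lemma ceil_one_div_sub_one_mul_lt {x : ℝ} (hx : 0 < x) : ((⌈1 / x⌉ : ℝ) - 1) * x < 1 := by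
  have h : (⌈1 / x⌉ : ℝ) - 1 < 1 / x := by linarith [Int.ceil_lt_add_one (1 / x)]
  rwa [lt_div_iff₀ hx] at h

lemma TL_mem_Icc {x : ℝ} (hx : x ∈ Icc (0 : ℝ) 1) : TL x ∈ Icc (0 : ℝ) 1 := by
  unfold TL
  split_ifs with h0 h1
  · exact left_mem_Icc.2 zero_le_one
  · exact right_mem_Icc.2 zero_le_one
  have hx0 : 0 < x := lt_of_le_of_ne hx.1 (Ne.symm h0)
  have hx1 : x < 1 := lt_of_le_of_ne hx.2 h1
  set m : ℝ := ((⌈1 / x⌉ : ℤ) : ℝ)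
  have hmx : 1 ≤ m * x := one_le_ceil_one_div_mul hx0
  have hmx' : (m - 1) * x < 1 := ceil_one_div_sub_one_mul_lt hx0
  have hm : 1 ≤ m := by nlinarith
  constructor <;> nlinarith [mul_nonneg (sub_nonneg.2 hm) (sub_nonneg.2 hmx)]

lemma TA_mem_Icc {x : ℝ} (hx : x ∈ Icc (0 : ℝ) 1) : TA x ∈ Icc (0 : ℝ) 1 := by
  obtain ⟨h0, h1⟩ := TL_mem_Icc hx
  exact ⟨by unfold TA; linarith, by unfold TA; linarith⟩

lemma TL_mem_addSubgroup {H : AddSubgroup ℝ} (h1 : (1 : ℝ) ∈ H) {x : ℝ} (hx : x ∈ H) :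
    TL x ∈ H := by
  unfold TL
  split_ifs
  · exact H.zero_mem
  · exact h1
  · set m : ℤ := ⌈1 / x⌉
    have hTL : (m : ℝ) * ((m : ℝ) - 1) * x - ((m : ℝ) - 1) =
        (m * (m - 1)) • x - (m - 1) • (1 : ℝ) := by
      simp [zsmul_eq_mul]
    rw [hTL]
    exact H.sub_mem (H.zsmul_mem hx _) (H.zsmul_mem h1 _)

lemma TA_mem_addSubgroup {H : AddSubgroup ℝ} (h1 : (1 : ℝ) ∈ H) {x : ℝ} (hx : x ∈ H) :
    TA x ∈ H :=
  H.sub_mem h1 (TL_mem_addSubgroup h1 hx)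

lemma Tc_mem_of_TL_TA_mem {s : Set ℝ} (h1 : (1 : ℝ) ∈ s) (hL : ∀ x ∈ s, TL x ∈ s)
    (hA : ∀ x ∈ s, TA x ∈ s) (j : Bool) (c : ℝ) {x : ℝ} (hx : x ∈ s) : Tc j c x ∈ s := by
  unfold Tc
  split_ifs
  exacts [h1, h1, hA x hx, hL x hx]

lemma Tom_mem {s : Set ℝ} {c : ℝ} (hs : ∀ j, ∀ x ∈ s, Tc j c x ∈ s) (ω : ℕ → Bool) (n : ℕ)
    {x : ℝ} (hx : x ∈ s) : Tom c ω n x ∈ s := by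
  induction n with
  | zero => exact hx
  | succ n ih => exact hs (ω n) _ ih

lemma Tom_mem_Icc (c : ℝ) (ω : ℕ → Bool) (n : ℕ) {x : ℝ} (hx : x ∈ Icc (0 : ℝ) 1) :
    Tom c ω n x ∈ Icc (0 : ℝ) 1 :=
  Tom_mem (fun j _ hy => Tc_mem_of_TL_TA_mem (right_mem_Icc.2 zero_le_one)
    (fun _ => TL_mem_Icc) (fun _ => TA_mem_Icc) j c hy) ω n hx

lemma Tom_mem_addSubgroup {H : AddSubgroup ℝ} (h1 : (1 : ℝ) ∈ H) (c : ℝ) (ω : ℕ → Bool) (n : ℕ)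
    {x : ℝ} (hx : x ∈ H) : Tom c ω n x ∈ H :=
  Tom_mem (fun j _ hy => Tc_mem_of_TL_TA_mem (s := H) h1 (fun _ => TL_mem_addSubgroup h1)
    (fun _ => TA_mem_addSubgroup h1) j c hy) ω n hx

lemma Rat.cast_mem_zmultiples_inv_den (q : ℚ) : (q : ℝ) ∈ zmultiples ((q.den : ℝ)⁻¹) :=
  mem_zmultiples_iff.2 ⟨q.num, by rw [zsmul_eq_mul, Rat.cast_def, div_eq_mul_inv]⟩

lemma one_mem_zmultiples_inv_natCast {d : ℕ} (hd : d ≠ 0) : (1 : ℝ) ∈ zmultiples ((d : ℝ)⁻¹) :=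
  mem_zmultiples_iff.2
    ⟨d, by rw [zsmul_eq_mul, Int.cast_natCast, mul_inv_cancel₀ (Nat.cast_ne_zero.2 hd)]⟩

lemma Bornology.IsBounded.finite_inter_zmultiples {K : Set ℝ} (hK : Bornology.IsBounded K)
    (a : ℝ) : (K ∩ zmultiples a).Finite :=
  Metric.finite_isBounded_inter_isClosed (SetLike.isDiscrete_iff_discreteTopology.2 inferInstance)
    hK isClosed_of_discrete

/-- for rational `c ∈ (0,1/2]` the full random orbit set of `c` and
`1 − c` is finite (so `L_c` admits a finite Markov partition). -/
theorem rational_c_orbit_finite (c : ℝ) (hcq : ∃ q : ℚ, (q : ℝ) = c)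
    (hc0 : 0 < c) (hc : c ≤ 1/2) :
    Set.Finite ({y : ℝ | ∃ (ω : ℕ → Bool) (n : ℕ), Tom c ω n c = y} ∪
      {y : ℝ | ∃ (ω : ℕ → Bool) (n : ℕ), Tom c ω n (1 - c) = y}) := by
  obtain ⟨q, rfl⟩ := hcq
  set H := zmultiples ((q.den : ℝ)⁻¹)
  have h1 : (1 : ℝ) ∈ H := one_mem_zmultiples_inv_natCast q.den_nz
  have hq : (q : ℝ) ∈ H := Rat.cast_mem_zmultiples_inv_den q
  have hqI : (q : ℝ) ∈ Icc (0 : ℝ) 1 := ⟨hc0.le, by linarith⟩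
  have hqI_sub : 1 - (q : ℝ) ∈ Icc (0 : ℝ) 1 := ⟨by linarith, by linarith⟩
  refine ((Metric.isBounded_Icc 0 1).finite_inter_zmultiples ((q.den : ℝ)⁻¹)).subset ?_
  rintro _ (⟨ω, n, rfl⟩ | ⟨ω, n, rfl⟩)
  · exact ⟨Tom_mem_Icc _ ω n hqI, Tom_mem_addSubgroup h1 _ ω n hq⟩
  · exact ⟨Tom_mem_Icc _ ω n hqI_sub, Tom_mem_addSubgroup h1 _ ω n (H.sub_mem h1 hq)⟩
end
end

section
/- Let k ≥ 2 be an integer and c = 1/2^k. Then the set of all random orbit points of 1 − c satisfies {T_ω^n(1−c) : ω ∈ {0,1}^ℕ, n ≥ 0} = {1 − 1/2^i : 2 ≤ i ≤ k} ∪ {1/2^{i−1} : 2 ≤ i ≤ k} ∪ {1}. -/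
open MeasureTheory Filter Set
open scoped Classical ENNReal

noncomputable section

/-! The value `c = 1/2^k` puts `1 - c` on the dyadic ladder `1 - 1/2^i`. On `[3/4, 1)` the map
`T_{0,c}` acts as `x ↦ 2x - 1`, stepping down the ladder, while `T_{1,c}` acts as `x ↦ 2 - 2x` on
`(1/2, 1 - c/2]`, sending `1 - 1/2^i` to `1/2^(i-1)`; both maps send every `1/n` and `1` to the
fixed point `1`. Hence the ladder, its images under `T_{1,c}` and `1` form an invariant set, and
each of its points is reached by running `T_{0,c}` and then switching to `T_{1,c}`. -/

lemma TL_eq_two_mul_sub_one {x : ℝ} (h1 : 1 / 2 < x) (h2 : x < 1) : TL x = 2 * x - 1 := by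
  have hceil : ⌈1 / x⌉ = 2 := by
    rw [Int.ceil_eq_iff]
    constructor
    · push_cast; rw [lt_div_iff₀ (by linarith)]; linarith
    · push_cast; rw [div_le_iff₀ (by linarith)]; linarith
  rw [TL, if_neg (by linarith), if_neg (by linarith), hceil]
  push_cast; ring

lemma TL_one_div_natCast {n : ℕ} (hn : 2 ≤ n) : TL (1 / n) = 0 := by
  have hn' : (2 : ℝ) ≤ n := by exact_mod_cast hn
  have hceil : ⌈1 / (1 / (n : ℝ))⌉ = n := by rw [one_div_one_div, Int.ceil_natCast]
  rw [TL, if_neg (by positivity), if_neg, hceil]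
  · push_cast; field_simp; ring
  · rw [div_eq_one_iff_eq (by positivity)]; linarith

lemma Tc_one (j : Bool) (c : ℝ) : Tc j c 1 = 1 := by
  unfold Tc
  split_ifs <;> simp_all

section

variable {c x : ℝ}

lemma Tc_false_eq_two_mul_sub_one (hc0 : 0 < c) (hc : c ≤ 1 / 2) (h1 : 3 / 4 ≤ x)
    (h2 : x < 1) : Tc false c x = 2 * x - 1 := by
  have not_TA : ¬ ∃ n : ℕ, 2 ≤ n ∧ 1 / (n : ℝ) ≤ x ∧ x < zp c n := by
    rintro ⟨n, hn, -, hlt⟩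
    have hn' : (2 : ℝ) ≤ n := by exact_mod_cast hn
    -- `zp c n ≤ zp c 2 = 1/2 + c/2 ≤ 3/4`
    have hn_inv : 1 / (n : ℝ) ≤ 1 / 2 := by gcongr
    have hn1 : 0 < 1 / ((n : ℝ) - 1) := one_div_pos.mpr (by linarith)
    have hn1' : 1 / ((n : ℝ) - 1) ≤ 1 := by rw [div_le_one (by linarith)]; linarith
    have hzp : c * (1 / (n : ℝ)) * (1 / ((n : ℝ) - 1)) ≤ c * (1 / 2) * 1 :=
      mul_le_mul (mul_le_mul_of_nonneg_left hn_inv hc0.le) hn1' hn1.le (by positivity)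
    rw [zp] at hlt
    linarith
  rw [Tc, if_neg (fun h => hc0.ne' h.1), if_neg h2.ne, if_neg (by simpa using not_TA),
    TL_eq_two_mul_sub_one (by linarith) h2]

lemma Tc_true_eq_two_sub_two_mul (hc0 : 0 < c) (h1 : 1 / 2 < x) (h2 : x ≤ 1 - c / 2) :
    Tc true c x = 2 - 2 * x := by
  have hTA : ∃ n : ℕ, 2 ≤ n ∧ 1 / (n : ℝ) ≤ x ∧ x ≤ zm c (n - 1) :=
    ⟨2, le_rfl, by push_cast; linarith, by norm_num [zm]; linarith⟩
  rw [Tc, if_neg (fun h => hc0.ne' h.1), if_neg (by linarith), if_pos (Or.inr ⟨rfl, hTA⟩), TA,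
    TL_eq_two_mul_sub_one h1 (by linarith)]
  ring

lemma Tc_one_div_natCast (j : Bool) (hc0 : 0 < c) (hc1 : c ≤ 1) {n : ℕ} (hn : 2 ≤ n) :
    Tc j c (1 / n) = 1 := by
  have hn' : (2 : ℝ) ≤ n := by exact_mod_cast hn
  have hpos : (0 : ℝ) < 1 / n := by positivity
  have hTA : (j = false ∧ ∃ m : ℕ, 2 ≤ m ∧ 1 / (m : ℝ) ≤ 1 / n ∧ 1 / n < zp c m) ∨
      (j = true ∧ ∃ m : ℕ, 2 ≤ m ∧ 1 / (m : ℝ) ≤ 1 / n ∧ 1 / n ≤ zm c (m - 1)) := by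
    cases j
    · refine Or.inl ⟨rfl, n, hn, le_rfl, ?_⟩
      have : 0 < c * (1 / (n : ℝ)) * (1 / ((n : ℝ) - 1)) := by
        have : (0 : ℝ) < n - 1 := by linarith
        positivity
      rw [zp]; linarith
    · refine Or.inr ⟨rfl, n, hn, le_rfl, ?_⟩
      have hsub : zm c (n - 1) - 1 / n = (1 - c) / (n * (n - 1)) := by
        have hn1 : (n : ℝ) - 1 ≠ 0 := by linarith
        rw [zm, Nat.cast_sub (by omega), Nat.cast_one, sub_add_cancel]
        field_simp
        ring
      have : 0 ≤ (1 - c) / ((n : ℝ) * (n - 1)) := by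
        apply div_nonneg (by linarith)
        nlinarith
      linarith
  rw [Tc, if_neg (fun h => hc0.ne' h.1), if_neg (by rw [div_eq_one_iff_eq]; all_goals linarith),
    if_pos hTA, TA, TL_one_div_natCast hn, sub_zero]

lemma Tc_false_one_sub_one_div_two_pow (hc0 : 0 < c) (hc : c ≤ 1 / 2) {i : ℕ} (hi : 2 ≤ i) :
    Tc false c (1 - 1 / 2 ^ i) = 1 - 1 / 2 ^ (i - 1) := by
  have hpow : (2 : ℝ) ^ i = 2 * 2 ^ (i - 1) := by rw [← pow_succ']; congr 1; omega
  have hle : (1 : ℝ) / 2 ^ i ≤ 1 / 4 := by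
    rw [one_div_le_one_div (by positivity) (by norm_num)]
    calc (4 : ℝ) = 2 ^ 2 := by norm_num
      _ ≤ 2 ^ i := pow_le_pow_right₀ one_le_two hi
  rw [Tc_false_eq_two_mul_sub_one hc0 hc (by linarith) (by simp), hpow]
  field_simp
  ring

lemma Tc_true_one_sub_one_div_two_pow (hc0 : 0 < c) {i : ℕ} (hi : 2 ≤ i)
    (hc : c ≤ 1 / 2 ^ i) : Tc true c (1 - 1 / 2 ^ i) = 1 / 2 ^ (i - 1) := by
  have hpow : (2 : ℝ) ^ i = 2 * 2 ^ (i - 1) := by rw [← pow_succ']; congr 1; omega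
  have hlt : (1 : ℝ) / 2 ^ i < 1 / 2 := by
    rw [one_div_lt_one_div (by positivity) (by norm_num)]
    calc (2 : ℝ) = 2 ^ 1 := by norm_num
      _ < 2 ^ i := pow_lt_pow_right₀ one_lt_two (by omega)
  rw [Tc_true_eq_two_sub_two_mul hc0 (by linarith) (by linarith), hpow]
  field_simp
  ring

lemma Tc_one_div_two_pow (j : Bool) (hc0 : 0 < c) (hc1 : c ≤ 1) {i : ℕ} (hi : 1 ≤ i) :
    Tc j c (1 / 2 ^ i) = 1 := by
  have h := Tc_one_div_natCast j hc0 hc1 (Nat.le_self_pow (by omega : i ≠ 0) 2)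
  rwa [Nat.cast_pow, Nat.cast_ofNat] at h

end

lemma Tom_succ (c : ℝ) (ω : ℕ → Bool) (n : ℕ) (x : ℝ) :
    Tom c ω (n + 1) x = Tc (ω n) c (Tom c ω n x) := rfl

lemma Tom_mem_of_mapsTo {c : ℝ} {s : Set ℝ} (h : ∀ j, MapsTo (Tc j c) s s) (ω : ℕ → Bool)
    {x : ℝ} (hx : x ∈ s) (n : ℕ) : Tom c ω n x ∈ s := by
  induction n with
  | zero => exact hx
  | succ n ih => exact h (ω n) ih

lemma Tom_one_sub_one_div_two_pow_of_false {c : ℝ} (hc0 : 0 < c) (hc : c ≤ 1 / 2)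
    {ω : ℕ → Bool} {k t : ℕ} (htk : t + 2 ≤ k) (hω : ∀ m < t, ω m = false) :
    Tom c ω t (1 - 1 / 2 ^ k) = 1 - 1 / 2 ^ (k - t) := by
  induction t with
  | zero => rfl
  | succ t ih =>
    rw [Tom_succ, hω t (by omega), ih (by omega) (fun m hm => hω m (by omega)),
      Tc_false_one_sub_one_div_two_pow hc0 hc (by omega), show k - t - 1 = k - (t + 1) by omega]

def dyadicOrbit (k : ℕ) : Set ℝ :=
  {y : ℝ | ∃ i : ℕ, 2 ≤ i ∧ i ≤ k ∧ y = 1 - 1 / 2 ^ i}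
    ∪ {y : ℝ | ∃ i : ℕ, 2 ≤ i ∧ i ≤ k ∧ y = 1 / 2 ^ (i - 1)}
    ∪ {1}

lemma mapsTo_Tc_dyadicOrbit {c : ℝ} {k : ℕ} (hc0 : 0 < c) (hc : c ≤ 1 / 2 ^ k) (j : Bool) :
    MapsTo (Tc j c) (dyadicOrbit k) (dyadicOrbit k) := by
  have hc_le : ∀ i ≤ k, c ≤ 1 / 2 ^ i := fun i hi =>
    hc.trans (one_div_le_one_div_of_le (by positivity) (pow_le_pow_right₀ one_le_two hi))
  have hc_one : c ≤ 1 := (hc_le 0 (Nat.zero_le k)).trans_eq (by simp)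
  rintro _ ((⟨i, hi2, hik, rfl⟩ | ⟨i, hi2, hik, rfl⟩) | rfl)
  · cases j
    · have hc2 : c ≤ 1 / 2 := (hc_le 1 (by omega)).trans_eq (by simp)
      rw [Tc_false_one_sub_one_div_two_pow hc0 hc2 hi2]
      rcases hi2.eq_or_lt with rfl | hi2
      · exact Or.inl (Or.inr ⟨2, le_rfl, hik, by norm_num⟩)
      · exact Or.inl (Or.inl ⟨i - 1, by omega, by omega, rfl⟩)
    · rw [Tc_true_one_sub_one_div_two_pow hc0 hi2 (hc_le i hik)]
      exact Or.inl (Or.inr ⟨i, hi2, hik, rfl⟩)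
  · rw [Tc_one_div_two_pow j hc0 hc_one (by omega)]
    exact Or.inr rfl
  · rw [Tc_one]
    exact Or.inr rfl

/-- for `c = 1/2^k`, `k ≥ 2`, the set of random orbit points of `1 − c`. -/
theorem orbit_of_one_sub_c_for_power_of_two (k : ℕ) (hk : 2 ≤ k)
    (c : ℝ) (hc : c = 1 / 2 ^ k) :
    {y : ℝ | ∃ (ω : ℕ → Bool) (n : ℕ), Tom c ω n (1 - c) = y}
      = {y : ℝ | ∃ i : ℕ, 2 ≤ i ∧ i ≤ k ∧ y = 1 - 1 / 2 ^ i}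
        ∪ {y : ℝ | ∃ i : ℕ, 2 ≤ i ∧ i ≤ k ∧ y = 1 / 2 ^ (i - 1)}
        ∪ {1} := by
  subst hc
  have hc0 : (0 : ℝ) < 1 / 2 ^ k := by positivity
  have hc2 : (1 : ℝ) / 2 ^ k ≤ 1 / 2 := by
    gcongr
    calc (2 : ℝ) = 2 ^ 1 := by norm_num
      _ ≤ 2 ^ k := pow_le_pow_right₀ one_le_two (by omega)
  -- run `T_{0,c}` for `k - i` steps, then `T_{1,c}` forever
  have descend : ∀ i, 2 ≤ i → i ≤ k →
      Tom (1 / 2 ^ k) (fun m => decide (k - i ≤ m)) (k - i) (1 - 1 / 2 ^ k) = 1 - 1 / 2 ^ i :=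
    fun i hi2 hik => by
      rw [Tom_one_sub_one_div_two_pow_of_false hc0 hc2 (by omega) (fun m hm => by simp; omega),
        Nat.sub_sub_self hik]
  apply Subset.antisymm
  · rintro _ ⟨ω, n, rfl⟩
    exact Tom_mem_of_mapsTo (mapsTo_Tc_dyadicOrbit hc0 le_rfl) ω
      (Or.inl (Or.inl ⟨k, hk, le_rfl, rfl⟩)) n
  · rintro y ((⟨i, hi2, hik, rfl⟩ | ⟨i, hi2, hik, rfl⟩) | rfl)
    · exact ⟨_, k - i, descend i hi2 hik⟩
    · refine ⟨fun m => decide (k - i ≤ m), k - i + 1, ?_⟩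
      rw [Tom_succ, descend i hi2 hik]
      simp only [le_refl, decide_true]
      exact Tc_true_one_sub_one_div_two_pow hc0 hi2
        (one_div_le_one_div_of_le (by positivity) (pow_le_pow_right₀ one_le_two hik))
    · refine ⟨fun _ => true, 2, ?_⟩
      show Tc true _ (Tc true _ (1 - 1 / 2 ^ k)) = 1
      rw [Tc_true_one_sub_one_div_two_pow hc0 hk le_rfl,
        Tc_one_div_two_pow true hc0 (hc2.trans (by norm_num)) (by omega)]
end
end
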